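/- arXiv:2509.09835 — 10 statements merged into one kernel-verified Lean document; each statement's English description precedes it below -/
import Mathlib

section
/- Let θ > 0 and α < β be real numbers, and let σ, b, h, k₊, k₋ : ℝ → ℝ be continuous functions with σ(x)² > 0 and h(x) > 0 for all x ∈ [α,β], k₊(α) > 0 and k₋(β) > 0. Suppose u : ℝ → ℝ is twice continuously differentiable on [α,β], satisfies u(x) > 0 for all x ∈ [α,β], and for some λ ∈ ℝ satisfies (1/2)σ(x)²u''(x) + b(x)u'(x) + θ(h(x) − λ)u(x) = 0 for all x ∈ [α,β], together with the boundary conditions θk₊(α)u(α) + u'(α) = 0 and θk₋(β)u(β) − u'(β) = 0. Then λ > 0. -/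
open Set

/-- positivity of the principal eigenvalue of the Sturm–Liouville
eigenvalue problem associated with the risk-sensitive ergodic singular control
problem. -/
theorem sturm_liouville_eigenvalue_pos
    (θ α β lam : ℝ) (hθ : 0 < θ) (hαβ : α < β)
    (σ b h kp km : ℝ → ℝ)
    (hσc : Continuous σ) (hbc : Continuous b) (hhc : Continuous h)
    (hkpc : Continuous kp) (hkmc : Continuous km)
    (hσpos : ∀ x ∈ Icc α β, 0 < (σ x) ^ 2)
    (hhpos : ∀ x ∈ Icc α β, 0 < h x)
    (hkpα : 0 < kp α) (hkmβ : 0 < km β)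
    (u : ℝ → ℝ)
    (hu1 : ∀ x ∈ Icc α β, DifferentiableAt ℝ u x)
    (hu2 : ∀ x ∈ Icc α β, DifferentiableAt ℝ (deriv u) x)
    (hu2c : ContinuousOn (deriv (deriv u)) (Icc α β))
    (hupos : ∀ x ∈ Icc α β, 0 < u x)
    (hODE : ∀ x ∈ Icc α β,
      (1 / 2) * (σ x) ^ 2 * deriv (deriv u) x + b x * deriv u x
        + θ * (h x - lam) * u x = 0)
    (hbcα : θ * kp α * u α + deriv u α = 0)
    (hbcβ : θ * km β * u β - deriv u β = 0) :
    0 < lam := by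
  by_contra hlam
  push_neg at hlam
  have hαmem : α ∈ Icc α β := left_mem_Icc.2 hαβ.le
  have hβmem : β ∈ Icc α β := right_mem_Icc.2 hαβ.le
  -- boundary derivative signs
  have hdα : deriv u α < 0 := by
    have : deriv u α = -(θ * kp α * u α) := by linarith
    rw [this]
    have := mul_pos (mul_pos hθ hkpα) (hupos α hαmem)
    linarith
  have hdβ : 0 < deriv u β := by
    have : deriv u β = θ * km β * u β := by linarith
    rw [this]
    exact mul_pos (mul_pos hθ hkmβ) (hupos β hβmem)
  -- u is continuous on the interval
  have hucont : ContinuousOn u (Icc α β) :=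
    fun x hx => (hu1 x hx).continuousAt.continuousWithinAt
  have hd1cont : ContinuousOn (deriv u) (Icc α β) :=
    fun x hx => (hu2 x hx).continuousAt.continuousWithinAt
  -- minimum point
  obtain ⟨c, hc, hmin⟩ := isCompact_Icc.exists_isMinOn (nonempty_Icc.2 hαβ.le) hucont
  have hminOn : IsLocalMinOn u (Icc α β) c :=
    hmin.filter_mono inf_le_right
  -- c ≠ α
  have hcα : c ≠ α := by
    rintro rfl
    have hseg : segment ℝ c β ⊆ Icc c β := by
      rw [segment_eq_Icc hαβ.le]
    have hy : β - c ∈ posTangentConeAt (Icc c β) c :=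
      sub_mem_posTangentConeAt_of_segment_subset hseg
    have h0 : (0:ℝ) ≤ ((β - c) : ℝ) * deriv u c := by
      have := hminOn.hasFDerivWithinAt_nonneg
        ((hu1 c hc).hasFDerivAt.hasFDerivWithinAt) hy
      simpa [ContinuousLinearMap.smulRight_apply, smul_eq_mul, mul_comm] using this
    nlinarith
  -- c ≠ β
  have hcβ : c ≠ β := by
    rintro rfl
    have hseg : segment ℝ c α ⊆ Icc α c := by
      rw [segment_symm, segment_eq_Icc hαβ.le]
    have hy : α - c ∈ posTangentConeAt (Icc α c) c :=
      sub_mem_posTangentConeAt_of_segment_subset hseg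
    have h0 : (0:ℝ) ≤ ((α - c) : ℝ) * deriv u c := by
      have := hminOn.hasFDerivWithinAt_nonneg
        ((hu1 c hc).hasFDerivAt.hasFDerivWithinAt) hy
      simpa [ContinuousLinearMap.smulRight_apply, smul_eq_mul, mul_comm] using this
    nlinarith
  have hcI : c ∈ Ioo α β := ⟨hc.1.lt_of_ne (Ne.symm hcα), hc.2.lt_of_ne hcβ⟩
  -- local min, so deriv u c = 0
  have hnhds : Icc α β ∈ nhds c := Icc_mem_nhds hcI.1 hcI.2
  have hlocmin : IsLocalMin u c := hmin.isLocalMin hnhds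
  have hdc : deriv u c = 0 := hlocmin.deriv_eq_zero
  -- second derivative is negative at c
  have hd2c : deriv (deriv u) c < 0 := by
    have hode := hODE c hc
    rw [hdc] at hode
    have hσ := hσpos c hc
    have hhl : 0 < h c - lam := by have := hhpos c hc; linarith
    have huc := hupos c hc
    nlinarith [mul_pos (mul_pos hθ hhl) huc]
  -- second derivative is negative near c
  have hcont2 : ContinuousAt (deriv (deriv u)) c :=
    (hu2c c hc).continuousAt hnhds
  have hev : ∀ᶠ x in nhds c, deriv (deriv u) x < 0 :=
    hcont2.eventually_lt continuousAt_const hd2c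
  obtain ⟨ε, hε, hball⟩ := Metric.eventually_nhds_iff_ball.1 hev
  set d : ℝ := min (c + ε / 2) β with hd_def
  have hcd : c < d := lt_min (by linarith) hcI.2
  have hsub : Icc c d ⊆ Icc α β := Icc_subset_Icc hc.1 (min_le_right _ _)
  have hball' : ∀ x ∈ Ioo c d, deriv (deriv u) x < 0 := by
    intro x hx
    apply hball
    rw [Metric.mem_ball, Real.dist_eq, abs_lt]
    constructor
    · linarith [hx.1]
    · have : x < c + ε / 2 := lt_of_lt_of_le hx.2 (min_le_left _ _)
      linarith
  -- deriv u is strictly decreasing on [c, d]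
  have hanti : StrictAntiOn (deriv u) (Icc c d) := by
    apply strictAntiOn_of_deriv_neg (convex_Icc c d)
      (hd1cont.mono hsub)
    intro x hx
    rw [interior_Icc] at hx
    exact hball' x hx
  have hdneg : ∀ x ∈ Ioo c d, deriv u x < 0 := by
    intro x hx
    have := hanti (left_mem_Icc.2 hcd.le) ⟨hx.1.le, hx.2.le⟩ hx.1
    rwa [hdc] at this
  -- hence u is strictly decreasing on [c, d]
  have huanti : StrictAntiOn u (Icc c d) := by
    apply strictAntiOn_of_deriv_neg (convex_Icc c d) (hucont.mono hsub)
    intro x hx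
    rw [interior_Icc] at hx
    exact hdneg x hx
  have : u d < u c := huanti (left_mem_Icc.2 hcd.le) (right_mem_Icc.2 hcd.le) hcd
  have : u c ≤ u d := hmin (hsub (right_mem_Icc.2 hcd.le))
  linarith
end

section
/- Let θ > 0, λ ∈ ℝ, α < β, and let b, σ, h, k₊, k₋ : ℝ → ℝ be continuous with σ(x)² > 0 for all x ∈ ℝ, and set q(x) = exp(∫₀ˣ 2b(y)/σ(y)² dy). Suppose u : ℝ → ℝ is twice continuously differentiable on [α,β], satisfies (1/2)σ(x)²u''(x) + b(x)u'(x) + θ(h(x) − λ)u(x) = 0 for all x ∈ [α,β], the boundary conditions θk₊(α)u(α) + u'(α) = 0 and θk₋(β)u(β) − u'(β) = 0, and the normalization ∫_α^β (2θq(y)/σ(y)²)u(y)² dy = 1. Then λ = θ(q(α)k₊(α)u(α)² + q(β)k₋(β)u(β)²) + ∫_α^β q(y)[(2θh(y)/σ(y)²)u(y)² − u'(y)²] dy. -/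
open Set intervalIntegral

/-! Multiplying the equation by `2q/σ²`, and using `q' = (2b/σ²) q`, puts it in divergence form
`(q u')' = -(2θ/σ²)(h - λ) q u`. Hence `(q u' u)' = q u'² - (2θ/σ²)(h - λ) q u²`; integrating over
`[α, β]`, the boundary conditions turn the boundary term `q u' u` into the `k₊, k₋` terms and the
normalization turns `λ ∫ (2θq/σ²) u²` into `λ`. -/

theorem hasDerivAt_exp_integral {g q : ℝ → ℝ} {a : ℝ} (hg : Continuous g)
    (hq : ∀ x, q x = Real.exp (∫ y in a..x, g y)) (x : ℝ) :
    HasDerivAt q (g x * q x) x := by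
  have hq' : q = fun x => Real.exp (∫ y in a..x, g y) := funext hq
  subst hq'
  simpa [mul_comm] using (hg.integral_hasStrictDerivAt a x).hasDerivAt.exp

theorem hasDerivAt_mul_deriv_of_ode {q b σ c u : ℝ → ℝ} {x : ℝ}
    (hq : HasDerivAt q (2 * b x / σ x ^ 2 * q x) x) (hσ : σ x ≠ 0)
    (hu : DifferentiableAt ℝ (deriv u) x)
    (hode : (1 / 2) * σ x ^ 2 * deriv (deriv u) x + b x * deriv u x + c x * u x = 0) :
    HasDerivAt (fun y => q y * deriv u y) (-(2 * c x / σ x ^ 2 * q x * u x)) x := by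
  refine (hq.mul hu.hasDerivAt).congr_deriv ?_
  field_simp
  linear_combination (2 * q x) * hode

theorem integral_mul_deriv_sq_sub_mul_sq {P r u u' : ℝ → ℝ} {α β : ℝ} (hαβ : α ≤ β)
    (hu : ∀ x ∈ Icc α β, HasDerivAt u (u' x) x)
    (hPu' : ∀ x ∈ Icc α β, HasDerivAt (fun y => P y * u' y) (-(r x * u x)) x)
    (hint : IntervalIntegrable (fun x => P x * u' x ^ 2 - r x * u x ^ 2)
      MeasureTheory.volume α β) :
    ∫ x in α..β, (P x * u' x ^ 2 - r x * u x ^ 2) = P β * u' β * u β - P α * u' α * u α := by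
  refine integral_eq_sub_of_hasDerivAt (f := fun x => P x * u' x * u x) (fun x hx => ?_) hint
  rw [uIcc_of_le hαβ] at hx
  refine ((hPu' x hx).mul (hu x hx)).congr_deriv ?_
  ring

theorem eigenvalue_representation_formula_general
    (θ lam α β : ℝ) (hαβ : α < β)
    (b σ h kp km : ℝ → ℝ)
    (hbc : Continuous b) (hσc : Continuous σ) (hhc : Continuous h)
    (hσpos : ∀ x : ℝ, 0 < (σ x) ^ 2)
    (q : ℝ → ℝ)
    (hq : ∀ x : ℝ, q x = Real.exp (∫ y in (0 : ℝ)..x, 2 * b y / (σ y) ^ 2))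
    (u : ℝ → ℝ)
    (hu1 : ∀ x ∈ Icc α β, DifferentiableAt ℝ u x)
    (hu2 : ∀ x ∈ Icc α β, DifferentiableAt ℝ (deriv u) x)
    (hODE : ∀ x ∈ Icc α β,
      (1 / 2) * (σ x) ^ 2 * deriv (deriv u) x + b x * deriv u x
        + θ * (h x - lam) * u x = 0)
    (hbcα : θ * kp α * u α + deriv u α = 0)
    (hbcβ : θ * km β * u β - deriv u β = 0)
    (hnorm : ∫ y in α..β, (2 * θ * q y / (σ y) ^ 2) * (u y) ^ 2 = 1) :
    lam = θ * (q α * kp α * (u α) ^ 2 + q β * km β * (u β) ^ 2)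
      + ∫ y in α..β,
          q y * ((2 * θ * h y / (σ y) ^ 2) * (u y) ^ 2 - (deriv u y) ^ 2) := by
  have hσ (x : ℝ) : σ x ^ 2 ≠ 0 := (hσpos x).ne'
  have hqd (x : ℝ) : HasDerivAt q (2 * b x / σ x ^ 2 * q x) x :=
    hasDerivAt_exp_integral (by fun_prop (disch := simp [hσ])) hq x
  have hqc : Continuous q := continuous_iff_continuousAt.2 fun x => (hqd x).continuousAt
  have huc : ContinuousOn u (Icc α β) := fun x hx => (hu1 x hx).continuousAt.continuousWithinAt
  have hu'c : ContinuousOn (deriv u) (Icc α β) :=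
    fun x hx => (hu2 x hx).continuousAt.continuousWithinAt
  have hint_energy : IntervalIntegrable
      (fun y => q y * ((2 * θ * h y / (σ y) ^ 2) * (u y) ^ 2 - (deriv u y) ^ 2))
      MeasureTheory.volume α β :=
    ContinuousOn.intervalIntegrable_of_Icc hαβ.le (by fun_prop (disch := simp [hσ]))
  have hint_weight : IntervalIntegrable (fun y => (2 * θ * q y / (σ y) ^ 2) * (u y) ^ 2)
      MeasureTheory.volume α β :=
    ContinuousOn.intervalIntegrable_of_Icc hαβ.le (by fun_prop (disch := simp [hσ]))
  have hparts := integral_mul_deriv_sq_sub_mul_sq hαβ.le (fun x hx => (hu1 x hx).hasDerivAt)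
    (fun x hx => hasDerivAt_mul_deriv_of_ode (c := fun x => θ * (h x - lam)) (hqd x)
      (ne_zero_pow two_ne_zero (hσ x)) (hu2 x hx) (hODE x hx))
    (ContinuousOn.intervalIntegrable_of_Icc hαβ.le (by fun_prop (disch := simp [hσ])))
  have hsplit :
      ∫ y in α..β, (q y * deriv u y ^ 2 - 2 * (θ * (h y - lam)) / σ y ^ 2 * q y * u y ^ 2)
        = lam * (∫ y in α..β, (2 * θ * q y / (σ y) ^ 2) * (u y) ^ 2)
          - ∫ y in α..β, q y * ((2 * θ * h y / (σ y) ^ 2) * (u y) ^ 2 - (deriv u y) ^ 2) := by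
    rw [← integral_const_mul, ← integral_sub (hint_weight.const_mul lam) hint_energy]
    congr 1 with y
    field_simp
    ring
  linear_combination hparts - hsplit - lam * hnorm - q β * u β * hbcβ - q α * u α * hbcα

/-- the representation formula (3.10) for the principal
Sturm–Liouville eigenvalue `λ(α, β, θ)` in terms of the normalised
eigenfunction. -/
theorem eigenvalue_representation_formula
    (θ lam α β : ℝ) (hθ : 0 < θ) (hαβ : α < β)
    (b σ h kp km : ℝ → ℝ)
    (hbc : Continuous b) (hσc : Continuous σ) (hhc : Continuous h)
    (hkpc : Continuous kp) (hkmc : Continuous km)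
    (hσpos : ∀ x : ℝ, 0 < (σ x) ^ 2)
    (q : ℝ → ℝ)
    (hq : ∀ x : ℝ, q x = Real.exp (∫ y in (0 : ℝ)..x, 2 * b y / (σ y) ^ 2))
    (u : ℝ → ℝ)
    (hu1 : ∀ x ∈ Icc α β, DifferentiableAt ℝ u x)
    (hu2 : ∀ x ∈ Icc α β, DifferentiableAt ℝ (deriv u) x)
    (hu2c : ContinuousOn (deriv (deriv u)) (Icc α β))
    (hODE : ∀ x ∈ Icc α β,
      (1 / 2) * (σ x) ^ 2 * deriv (deriv u) x + b x * deriv u x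
        + θ * (h x - lam) * u x = 0)
    (hbcα : θ * kp α * u α + deriv u α = 0)
    (hbcβ : θ * km β * u β - deriv u β = 0)
    (hnorm : ∫ y in α..β, (2 * θ * q y / (σ y) ^ 2) * (u y) ^ 2 = 1) :
    lam = θ * (q α * kp α * (u α) ^ 2 + q β * km β * (u β) ^ 2)
      + ∫ y in α..β,
          q y * ((2 * θ * h y / (σ y) ^ 2) * (u y) ^ 2 - (deriv u y) ^ 2) :=
  eigenvalue_representation_formula_general θ lam α β hαβ b σ h kp km hbc hσc hhc hσpos q hq u hu1
    hu2 hODE hbcα hbcβ hnorm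
end

section
/- Let θ > 0, λ ∈ ℝ, α < β, and let b, σ, h : ℝ → ℝ be continuous with σ(x)² > 0 for all x, and let k₊, k₋ : ℝ → ℝ be C¹. Define H₋(x,θ) = (1/2)θσ(x)²k₊(x)² − (1/2)σ(x)²k₊'(x) − b(x)k₊(x) + h(x) and H₊(x,θ) = (1/2)θσ(x)²k₋(x)² + (1/2)σ(x)²k₋'(x) + b(x)k₋(x) + h(x). Suppose w : ℝ → ℝ is twice continuously differentiable on (α,β) and satisfies (1/2)σ(x)²w''(x) + (1/2)θ(σ(x)w'(x))² + b(x)w'(x) + h(x) − λ = 0 for all x ∈ (α,β). Then: (i) if w'(x) → −k₊(α) as x ↓ α, then w''(x) has a limit as x ↓ α, and this limit equals −k₊'(α) if and only if λ = H₋(α,θ); (ii) if w'(x) → k₋(β) as x ↑ β, then w''(x) has a limit as x ↑ β, and this limit equals k₋'(β) if and only if λ = H₊(β,θ). -/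
/-!
Where `σ ≠ 0` the Riccati equation can be solved for `w''` as a continuous function of `x`
and `w'`, so `w''` inherits a one-sided limit from `w'`, and that limit solves the equation
at the boundary point. The equation is affine in `w''` with slope `σ²/2 ≠ 0`, so the limit
equals a prescribed value exactly when `λ` is the left-hand side evaluated there, which for
the values `-k₊'(α)` and `k₋'(β)` is `H₋(α,θ)` and `H₊(β,θ)`.
-/

open Set Filter Topology

section Riccati

variable (θ : ℝ) (b σ h : ℝ → ℝ)

/-- Left-hand side of the Riccati equation at `x`, with `p` and `q` in place of `w'(x)`
and `w''(x)`. -/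
noncomputable def riccatiLHS (x p q : ℝ) : ℝ :=
  1 / 2 * σ x ^ 2 * q + 1 / 2 * θ * (σ x * p) ^ 2 + b x * p + h x

noncomputable def riccatiSolve (lam x p : ℝ) : ℝ :=
  2 * (lam - riccatiLHS θ b σ h x p 0) / σ x ^ 2

variable {θ b σ h}

theorem riccatiLHS_eq_iff {lam x p q : ℝ} (hσ : σ x ≠ 0) :
    riccatiLHS θ b σ h x p q = lam ↔ q = riccatiSolve θ b σ h lam x p := by
  have hσ2 : σ x ^ 2 ≠ 0 := pow_ne_zero 2 hσ
  rw [riccatiSolve, eq_div_iff hσ2]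
  unfold riccatiLHS
  constructor <;> intro hq <;> linarith

theorem tendsto_riccatiSolve {l : Filter ℝ} {a lam p : ℝ} {u : ℝ → ℝ} (hl : l ≤ 𝓝 a)
    (hb : ContinuousAt b a) (hσ : ContinuousAt σ a) (hh : ContinuousAt h a)
    (hσa : σ a ≠ 0) (hu : Tendsto u l (𝓝 p)) :
    Tendsto (fun x => riccatiSolve θ b σ h lam x (u x)) l
      (𝓝 (riccatiSolve θ b σ h lam a p)) := by
  have hb' := hb.tendsto.mono_left hl
  have hσ' := hσ.tendsto.mono_left hl
  have hh' := hh.tendsto.mono_left hl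
  have hlhs : Tendsto (fun x => riccatiLHS θ b σ h x (u x) 0) l
      (𝓝 (riccatiLHS θ b σ h a p 0)) :=
    ((((tendsto_const_nhds.mul (hσ'.pow 2)).mul tendsto_const_nhds).add
      (tendsto_const_nhds.mul ((hσ'.mul hu).pow 2))).add (hb'.mul hu)).add hh'
  exact (tendsto_const_nhds.mul (tendsto_const_nhds.sub hlhs)).div (hσ'.pow 2)
    (pow_ne_zero 2 hσa)

theorem exists_tendsto_of_riccati {l : Filter ℝ} {a lam p : ℝ} {u v : ℝ → ℝ}
    (hl : l ≤ 𝓝 a) (hb : ContinuousAt b a) (hσ : ContinuousAt σ a)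
    (hh : ContinuousAt h a) (hσa : σ a ≠ 0)
    (hode : ∀ᶠ x in l, riccatiLHS θ b σ h x (u x) (v x) = lam) (hu : Tendsto u l (𝓝 p)) :
    ∃ L, Tendsto v l (𝓝 L) ∧ ∀ q, (L = q ↔ lam = riccatiLHS θ b σ h a p q) := by
  refine ⟨riccatiSolve θ b σ h lam a p, ?_, fun q => ?_⟩
  · have hv : (fun x => riccatiSolve θ b σ h lam x (u x)) =ᶠ[l] v := by
      filter_upwards [hode, (hσ.eventually_ne hσa).filter_mono hl] with x hx hσx
      exact ((riccatiLHS_eq_iff hσx).1 hx).symm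
    exact (tendsto_riccatiSolve hl hb hσ hh hσa hu).congr' hv
  · rw [eq_comm, eq_comm (a := lam), riccatiLHS_eq_iff hσa]

end Riccati

theorem smooth_fit_characterisation_general
    (θ lam α β : ℝ) (hαβ : α < β)
    (b σ h kp km : ℝ → ℝ)
    (hbc : Continuous b) (hσc : Continuous σ) (hhc : Continuous h)
    (hσpos : ∀ x : ℝ, 0 < (σ x) ^ 2)
    (Hm Hp : ℝ → ℝ)
    (hHm : ∀ x, Hm x = (1 / 2) * θ * (σ x) ^ 2 * (kp x) ^ 2
      - (1 / 2) * (σ x) ^ 2 * deriv kp x - b x * kp x + h x)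
    (hHp : ∀ x, Hp x = (1 / 2) * θ * (σ x) ^ 2 * (km x) ^ 2
      + (1 / 2) * (σ x) ^ 2 * deriv km x + b x * km x + h x)
    (w : ℝ → ℝ)
    (hODE : ∀ x ∈ Ioo α β,
      (1 / 2) * (σ x) ^ 2 * deriv (deriv w) x
        + (1 / 2) * θ * (σ x * deriv w x) ^ 2
        + b x * deriv w x + h x - lam = 0) :
    (Tendsto (deriv w) (𝓝[>] α) (𝓝 (-kp α)) →
      ∃ L : ℝ, Tendsto (deriv (deriv w)) (𝓝[>] α) (𝓝 L) ∧
        (L = -deriv kp α ↔ lam = Hm α)) ∧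
    (Tendsto (deriv w) (𝓝[<] β) (𝓝 (km β)) →
      ∃ L : ℝ, Tendsto (deriv (deriv w)) (𝓝[<] β) (𝓝 L) ∧
        (L = deriv km β ↔ lam = Hp β)) := by
  have hσ : ∀ x, σ x ≠ 0 := fun x => pow_ne_zero_iff two_ne_zero |>.1 (hσpos x).ne'
  have hode : ∀ x ∈ Ioo α β, riccatiLHS θ b σ h x (deriv w x) (deriv (deriv w) x) = lam :=
    fun x hx => by rw [riccatiLHS]; linarith [hODE x hx]
  constructor
  · intro hT
    obtain ⟨L, hL, hiff⟩ := exists_tendsto_of_riccati nhdsWithin_le_nhds hbc.continuousAt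
      hσc.continuousAt hhc.continuousAt (hσ α)
      (eventually_of_mem (Ioo_mem_nhdsGT hαβ) hode) hT
    refine ⟨L, hL, (hiff _).trans ?_⟩
    rw [hHm, riccatiLHS]
    ring_nf
  · intro hT
    obtain ⟨L, hL, hiff⟩ := exists_tendsto_of_riccati nhdsWithin_le_nhds hbc.continuousAt
      hσc.continuousAt hhc.continuousAt (hσ β)
      (eventually_of_mem (Ioo_mem_nhdsLT hαβ) hode) hT
    refine ⟨L, hL, (hiff _).trans ?_⟩
    rw [hHp, riccatiLHS]
    ring_nf

/-- the smooth-fit characterisation: the `C²` pasting conditions at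
the free boundaries `α` and `β` can be satisfied if and only if
`H₋(α,θ) = λ = H₊(β,θ)`. -/
theorem smooth_fit_characterisation
    (θ lam α β : ℝ) (hθ : 0 < θ) (hαβ : α < β)
    (b σ h kp km : ℝ → ℝ)
    (hbc : Continuous b) (hσc : Continuous σ) (hhc : Continuous h)
    (hσpos : ∀ x : ℝ, 0 < (σ x) ^ 2)
    (hkp : ContDiff ℝ 1 kp) (hkm : ContDiff ℝ 1 km)
    (Hm Hp : ℝ → ℝ)
    (hHm : ∀ x, Hm x = (1 / 2) * θ * (σ x) ^ 2 * (kp x) ^ 2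
      - (1 / 2) * (σ x) ^ 2 * deriv kp x - b x * kp x + h x)
    (hHp : ∀ x, Hp x = (1 / 2) * θ * (σ x) ^ 2 * (km x) ^ 2
      + (1 / 2) * (σ x) ^ 2 * deriv km x + b x * km x + h x)
    (w : ℝ → ℝ)
    (hw1 : ∀ x ∈ Ioo α β, DifferentiableAt ℝ w x)
    (hw2 : ∀ x ∈ Ioo α β, DifferentiableAt ℝ (deriv w) x)
    (hw2c : ContinuousOn (deriv (deriv w)) (Ioo α β))
    (hODE : ∀ x ∈ Ioo α β,
      (1 / 2) * (σ x) ^ 2 * deriv (deriv w) x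
        + (1 / 2) * θ * (σ x * deriv w x) ^ 2
        + b x * deriv w x + h x - lam = 0) :
    (Tendsto (deriv w) (𝓝[>] α) (𝓝 (-kp α)) →
      ∃ L : ℝ, Tendsto (deriv (deriv w)) (𝓝[>] α) (𝓝 L) ∧
        (L = -deriv kp α ↔ lam = Hm α)) ∧
    (Tendsto (deriv w) (𝓝[<] β) (𝓝 (km β)) →
      ∃ L : ℝ, Tendsto (deriv (deriv w)) (𝓝[<] β) (𝓝 L) ∧
        (L = deriv km β ↔ lam = Hp β)) :=
  smooth_fit_characterisation_general θ lam α β hαβ b σ h kp km hbc hσc hhc hσpos Hm Hp hHm hHp w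
    hODE
end

section
/- Let θ > 0, α < α' < β, and let b, σ, h, k₊, k₋ : ℝ → ℝ be continuous with σ(x)² > 0 for all x, and set q(x) = exp(∫₀ˣ 2b(y)/σ(y)² dy). Suppose u₁ : ℝ → ℝ is twice continuously differentiable on [α,β] and satisfies (1/2)σ(x)²u₁''(x) + b(x)u₁'(x) + θ(h(x) − λ₁)u₁(x) = 0 on [α,β] with θk₋(β)u₁(β) − u₁'(β) = 0, and u₂ : ℝ → ℝ is twice continuously differentiable on [α',β] and satisfies (1/2)σ(x)²u₂''(x) + b(x)u₂'(x) + θ(h(x) − λ₂)u₂(x) = 0 on [α',β] with θk₊(α')u₂(α') + u₂'(α') = 0 and θk₋(β)u₂(β) − u₂'(β) = 0. Then (λ₂ − λ₁) ∫_{α'}^β (2θq(y)/σ(y)²)u₁(y)u₂(y) dy = q(α')(θk₊(α')u₁(α') + u₁'(α'))u₂(α'). -/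
open Set intervalIntegral

/-!
With `W = q (u₁' u₂ - u₁ u₂')`, the choice `q' = (2b/σ²) q` makes the first-order terms of the two
equations cancel, so `W' = -(λ₂ - λ₁) (2θq/σ²) u₁ u₂`. Integrating over `[α', β]`, `W(β) = 0` because
`u₁` and `u₂` satisfy the same Robin condition at `β`, while the Robin condition of `u₂` at `α'`
turns `W(α')` into the right-hand side.
-/

noncomputable def weightedWronskian (q u₁ u₂ : ℝ → ℝ) (x : ℝ) : ℝ :=
  q x * (deriv u₁ x * u₂ x - u₁ x * deriv u₂ x)

theorem hasDerivAt_weightedWronskian {q u₁ u₂ : ℝ → ℝ} {x a b c₁ c₂ : ℝ} (ha : a ≠ 0)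
    (hq : HasDerivAt q (q x * (b / a)) x)
    (hu₁ : DifferentiableAt ℝ u₁ x) (hu₁' : DifferentiableAt ℝ (deriv u₁) x)
    (hu₂ : DifferentiableAt ℝ u₂ x) (hu₂' : DifferentiableAt ℝ (deriv u₂) x)
    (hode₁ : a * deriv (deriv u₁) x + b * deriv u₁ x + c₁ * u₁ x = 0)
    (hode₂ : a * deriv (deriv u₂) x + b * deriv u₂ x + c₂ * u₂ x = 0) :
    HasDerivAt (weightedWronskian q u₁ u₂) (q x * ((c₂ - c₁) / a) * u₁ x * u₂ x) x := by
  have hW : HasDerivAt (weightedWronskian q u₁ u₂)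
      (q x * (b / a) * (deriv u₁ x * u₂ x - u₁ x * deriv u₂ x)
        + q x * ((deriv (deriv u₁) x * u₂ x + deriv u₁ x * deriv u₂ x)
          - (deriv u₁ x * deriv u₂ x + u₁ x * deriv (deriv u₂) x))) x :=
    hq.mul ((hu₁'.hasDerivAt.mul hu₂.hasDerivAt).sub (hu₁.hasDerivAt.mul hu₂'.hasDerivAt))
  convert hW using 1
  have hu₁'' : deriv (deriv u₁) x = -(b * deriv u₁ x + c₁ * u₁ x) / a := by
    rw [eq_div_iff ha]; linear_combination hode₁
  have hu₂'' : deriv (deriv u₂) x = -(b * deriv u₂ x + c₂ * u₂ x) / a := by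
    rw [eq_div_iff ha]; linear_combination hode₂
  rw [hu₁'', hu₂'']
  field_simp
  ring

theorem weightedWronskian_eq_zero_of_deriv_eq {q u₁ u₂ : ℝ → ℝ} {x k : ℝ}
    (h₁ : deriv u₁ x = k * u₁ x) (h₂ : deriv u₂ x = k * u₂ x) :
    weightedWronskian q u₁ u₂ x = 0 := by
  rw [weightedWronskian, h₁, h₂]
  ring

theorem weightedWronskian_of_deriv_eq {q u₁ u₂ : ℝ → ℝ} {x k : ℝ}
    (h₂ : deriv u₂ x = -(k * u₂ x)) :
    weightedWronskian q u₁ u₂ x = q x * (k * u₁ x + deriv u₁ x) * u₂ x := by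
  rw [weightedWronskian, h₂]
  ring

theorem eigenpair_comparison_left_boundary_general
    (θ α α' β lam₁ lam₂ : ℝ) (hαα' : α < α') (hα'β : α' < β)
    (b σ h kp km : ℝ → ℝ)
    (hbc : Continuous b) (hσc : Continuous σ)
    (hσpos : ∀ x : ℝ, 0 < (σ x) ^ 2)
    (q : ℝ → ℝ)
    (hq : ∀ x : ℝ, q x = Real.exp (∫ y in (0 : ℝ)..x, 2 * b y / (σ y) ^ 2))
    (u₁ u₂ : ℝ → ℝ)
    (hu₁1 : ∀ x ∈ Icc α β, DifferentiableAt ℝ u₁ x)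
    (hu₁2 : ∀ x ∈ Icc α β, DifferentiableAt ℝ (deriv u₁) x)
    (hODE₁ : ∀ x ∈ Icc α β,
      (1 / 2) * (σ x) ^ 2 * deriv (deriv u₁) x + b x * deriv u₁ x
        + θ * (h x - lam₁) * u₁ x = 0)
    (hbc₁β : θ * km β * u₁ β - deriv u₁ β = 0)
    (hu₂1 : ∀ x ∈ Icc α' β, DifferentiableAt ℝ u₂ x)
    (hu₂2 : ∀ x ∈ Icc α' β, DifferentiableAt ℝ (deriv u₂) x)
    (hODE₂ : ∀ x ∈ Icc α' β,
      (1 / 2) * (σ x) ^ 2 * deriv (deriv u₂) x + b x * deriv u₂ x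
        + θ * (h x - lam₂) * u₂ x = 0)
    (hbc₂α' : θ * kp α' * u₂ α' + deriv u₂ α' = 0)
    (hbc₂β : θ * km β * u₂ β - deriv u₂ β = 0) :
    (lam₂ - lam₁) * ∫ y in α'..β, (2 * θ * q y / (σ y) ^ 2) * u₁ y * u₂ y
      = q α' * (θ * kp α' * u₁ α' + deriv u₁ α') * u₂ α' := by
  have hσne : ∀ x, σ x ^ 2 ≠ 0 := fun x => (hσpos x).ne'
  have hsub : Icc α' β ⊆ Icc α β := Icc_subset_Icc_left hαα'.le
  have hq' : ∀ x, HasDerivAt q (q x * (2 * b x / σ x ^ 2)) x := by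
    rw [funext hq]
    exact fun x => ((((continuous_const.mul hbc).div (hσc.pow 2) hσne).integral_hasStrictDerivAt
      0 x).hasDerivAt).exp
  set g := fun y => (2 * θ * q y / (σ y) ^ 2) * u₁ y * u₂ y
  have hW : ∀ x ∈ uIcc α' β,
      HasDerivAt (weightedWronskian q u₁ u₂) (-(lam₂ - lam₁) * g x) x := by
    intro x hx
    rw [uIcc_of_le hα'β.le] at hx
    convert hasDerivAt_weightedWronskian (mul_ne_zero one_half_pos.ne' (hσne x))
      ((hq' x).congr_deriv (by field_simp)) (hu₁1 x (hsub hx)) (hu₁2 x (hsub hx))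
      (hu₂1 x hx) (hu₂2 x hx) (hODE₁ x (hsub hx)) (hODE₂ x hx) using 1
    field_simp
    ring
  have hqc : Continuous q := continuous_iff_continuousAt.2 fun x => (hq' x).continuousAt
  have hg : ContinuousOn g (uIcc α' β) := by
    rw [uIcc_of_le hα'β.le]
    exact ((((continuous_const.mul hqc).div (hσc.pow 2) hσne).continuousOn.mul
      fun x hx => (hu₁1 x (hsub hx)).continuousAt.continuousWithinAt).mul
      fun x hx => (hu₂1 x hx).continuousAt.continuousWithinAt)
  have hFTC := integral_eq_sub_of_hasDerivAt hW (hg.intervalIntegrable.const_mul _)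
  rw [integral_const_mul,
    weightedWronskian_eq_zero_of_deriv_eq (k := θ * km β) (by linarith) (by linarith),
    weightedWronskian_of_deriv_eq (k := θ * kp α') (by linarith)] at hFTC
  linarith

/-- identity comparing eigenpairs on the intervals `[α,β]` and
`[α',β]`; the key step in computing the derivative of the principal eigenvalue
with respect to the left boundary point. -/
theorem eigenpair_comparison_left_boundary
    (θ α α' β lam₁ lam₂ : ℝ) (hθ : 0 < θ) (hαα' : α < α') (hα'β : α' < β)
    (b σ h kp km : ℝ → ℝ)
    (hbc : Continuous b) (hσc : Continuous σ) (hhc : Continuous h)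
    (hkpc : Continuous kp) (hkmc : Continuous km)
    (hσpos : ∀ x : ℝ, 0 < (σ x) ^ 2)
    (q : ℝ → ℝ)
    (hq : ∀ x : ℝ, q x = Real.exp (∫ y in (0 : ℝ)..x, 2 * b y / (σ y) ^ 2))
    (u₁ u₂ : ℝ → ℝ)
    (hu₁1 : ∀ x ∈ Icc α β, DifferentiableAt ℝ u₁ x)
    (hu₁2 : ∀ x ∈ Icc α β, DifferentiableAt ℝ (deriv u₁) x)
    (hu₁2c : ContinuousOn (deriv (deriv u₁)) (Icc α β))
    (hODE₁ : ∀ x ∈ Icc α β,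
      (1 / 2) * (σ x) ^ 2 * deriv (deriv u₁) x + b x * deriv u₁ x
        + θ * (h x - lam₁) * u₁ x = 0)
    (hbc₁β : θ * km β * u₁ β - deriv u₁ β = 0)
    (hu₂1 : ∀ x ∈ Icc α' β, DifferentiableAt ℝ u₂ x)
    (hu₂2 : ∀ x ∈ Icc α' β, DifferentiableAt ℝ (deriv u₂) x)
    (hu₂2c : ContinuousOn (deriv (deriv u₂)) (Icc α' β))
    (hODE₂ : ∀ x ∈ Icc α' β,
      (1 / 2) * (σ x) ^ 2 * deriv (deriv u₂) x + b x * deriv u₂ x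
        + θ * (h x - lam₂) * u₂ x = 0)
    (hbc₂α' : θ * kp α' * u₂ α' + deriv u₂ α' = 0)
    (hbc₂β : θ * km β * u₂ β - deriv u₂ β = 0) :
    (lam₂ - lam₁) * ∫ y in α'..β, (2 * θ * q y / (σ y) ^ 2) * u₁ y * u₂ y
      = q α' * (θ * kp α' * u₁ α' + deriv u₁ α') * u₂ α' :=
  eigenpair_comparison_left_boundary_general θ α α' β lam₁ lam₂ hαα' hα'β b σ h kp km hbc hσc hσpos
    q hq u₁ u₂ hu₁1 hu₁2 hODE₁ hbc₁β hu₂1 hu₂2 hODE₂ hbc₂α' hbc₂β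
end

section
/- Let α < β, θ > 0, θ' > 0, λ₁, λ₂ ∈ ℝ, and let b, σ, h, k₊, k₋ : ℝ → ℝ be continuous with σ(x)² > 0 for all x, and set q(x) = exp(∫₀ˣ 2b(y)/σ(y)² dy). Suppose u₁, u₂ : ℝ → ℝ are twice continuously differentiable on [α,β], u₁ satisfies (1/2)σ(x)²u₁''(x) + b(x)u₁'(x) + θ(h(x) − λ₁)u₁(x) = 0 on [α,β] with θk₊(α)u₁(α) + u₁'(α) = 0 and θk₋(β)u₁(β) − u₁'(β) = 0, and u₂ satisfies (1/2)σ(x)²u₂''(x) + b(x)u₂'(x) + θ'(h(x) − λ₂)u₂(x) = 0 on [α,β] with θ'k₊(α)u₂(α) + u₂'(α) = 0 and θ'k₋(β)u₂(β) − u₂'(β) = 0. Then (θ' − θ)(q(β)k₋(β)u₁(β)u₂(β) + q(α)k₊(α)u₁(α)u₂(α)) = (θ'λ₂ − θλ₁) ∫_α^β (2q(y)/σ(y)²)u₁(y)u₂(y) dy − (θ' − θ) ∫_α^β (2q(y)h(y)/σ(y)²)u₁(y)u₂(y) dy. -/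
open Set intervalIntegral

/-- identity comparing eigenpairs for two values `θ` and `θ'` of
the risk-sensitivity parameter; the key step in computing the derivative of the
principal eigenvalue with respect to `θ`. -/
theorem eigenpair_comparison_theta
    (α β θ θ' lam₁ lam₂ : ℝ) (hαβ : α < β) (hθ : 0 < θ) (hθ' : 0 < θ')
    (b σ h kp km : ℝ → ℝ)
    (hbc : Continuous b) (hσc : Continuous σ) (hhc : Continuous h)
    (hkpc : Continuous kp) (hkmc : Continuous km)
    (hσpos : ∀ x : ℝ, 0 < (σ x) ^ 2)
    (q : ℝ → ℝ)
    (hq : ∀ x : ℝ, q x = Real.exp (∫ y in (0 : ℝ)..x, 2 * b y / (σ y) ^ 2))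
    (u₁ u₂ : ℝ → ℝ)
    (hu₁1 : ∀ x ∈ Icc α β, DifferentiableAt ℝ u₁ x)
    (hu₁2 : ∀ x ∈ Icc α β, DifferentiableAt ℝ (deriv u₁) x)
    (hu₁2c : ContinuousOn (deriv (deriv u₁)) (Icc α β))
    (hu₂1 : ∀ x ∈ Icc α β, DifferentiableAt ℝ u₂ x)
    (hu₂2 : ∀ x ∈ Icc α β, DifferentiableAt ℝ (deriv u₂) x)
    (hu₂2c : ContinuousOn (deriv (deriv u₂)) (Icc α β))
    (hODE₁ : ∀ x ∈ Icc α β,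
      (1 / 2) * (σ x) ^ 2 * deriv (deriv u₁) x + b x * deriv u₁ x
        + θ * (h x - lam₁) * u₁ x = 0)
    (hbc₁α : θ * kp α * u₁ α + deriv u₁ α = 0)
    (hbc₁β : θ * km β * u₁ β - deriv u₁ β = 0)
    (hODE₂ : ∀ x ∈ Icc α β,
      (1 / 2) * (σ x) ^ 2 * deriv (deriv u₂) x + b x * deriv u₂ x
        + θ' * (h x - lam₂) * u₂ x = 0)
    (hbc₂α : θ' * kp α * u₂ α + deriv u₂ α = 0)
    (hbc₂β : θ' * km β * u₂ β - deriv u₂ β = 0) :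
    (θ' - θ) * (q β * km β * u₁ β * u₂ β + q α * kp α * u₁ α * u₂ α)
      = (θ' * lam₂ - θ * lam₁)
          * (∫ y in α..β, (2 * q y / (σ y) ^ 2) * u₁ y * u₂ y)
        - (θ' - θ) * ∫ y in α..β, (2 * q y * h y / (σ y) ^ 2) * u₁ y * u₂ y := by
  have hσne : ∀ x : ℝ, (σ x) ^ 2 ≠ 0 := fun x => (hσpos x).ne'
  -- the coefficient function
  set c : ℝ → ℝ := fun y => 2 * b y / (σ y) ^ 2 with hc_def
  have hcc : Continuous c := (continuous_const.mul hbc).div (hσc.pow 2) hσne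
  -- q has derivative c x * q x
  have hqd : ∀ x : ℝ, HasDerivAt q (c x * q x) x := by
    intro x
    have hI : HasDerivAt (fun u => ∫ y in (0:ℝ)..u, c y) (c x) x :=
      integral_hasDerivAt_right (hcc.intervalIntegrable _ _)
        (hcc.stronglyMeasurableAtFilter _ _) hcc.continuousAt
    have := hI.exp
    have hfun : (fun u => Real.exp (∫ y in (0:ℝ)..u, c y)) = q := by
      funext u; rw [hq u]
    rw [hfun] at this
    rw [hq x]
    simpa [mul_comm] using this
  have hqc : Continuous q := by
    have : Continuous fun u => Real.exp (∫ y in (0:ℝ)..u, c y) :=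
      Real.continuous_exp.comp (intervalIntegral.continuous_primitive
        (fun a b => hcc.intervalIntegrable a b) 0)
    convert this using 1; funext u; rw [hq u]
  -- the Wronskian-type function
  set F : ℝ → ℝ := fun x => q x * (deriv u₁ x * u₂ x - u₁ x * deriv u₂ x) with hF_def
  set g : ℝ → ℝ := fun y =>
    (θ' - θ) * ((2 * q y * h y / (σ y) ^ 2) * u₁ y * u₂ y)
      - (θ' * lam₂ - θ * lam₁) * ((2 * q y / (σ y) ^ 2) * u₁ y * u₂ y) with hg_def
  have key : ∀ x ∈ uIcc α β, HasDerivAt F (g x) x := by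
    intro x hx
    rw [uIcc_of_le hαβ.le] at hx
    have h1 := (hu₁1 x hx).hasDerivAt
    have h2 := (hu₂1 x hx).hasDerivAt
    have h1' := (hu₁2 x hx).hasDerivAt
    have h2' := (hu₂2 x hx).hasDerivAt
    have hF : HasDerivAt F
        (c x * q x * (deriv u₁ x * u₂ x - u₁ x * deriv u₂ x)
          + q x * ((deriv (deriv u₁) x * u₂ x + deriv u₁ x * deriv u₂ x)
            - (deriv u₁ x * deriv u₂ x + u₁ x * deriv (deriv u₂) x))) x :=
      (hqd x).mul ((h1'.mul h2).sub (h1.mul h2'))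
    convert hF using 1
    have e1 : deriv (deriv u₁) x
        = (-2 * (b x * deriv u₁ x + θ * (h x - lam₁) * u₁ x)) / (σ x) ^ 2 := by
      rw [eq_div_iff (hσne x)]
      linarith [hODE₁ x hx]
    have e2 : deriv (deriv u₂) x
        = (-2 * (b x * deriv u₂ x + θ' * (h x - lam₂) * u₂ x)) / (σ x) ^ 2 := by
      rw [eq_div_iff (hσne x)]
      linarith [hODE₂ x hx]
    rw [e1, e2]
    simp only [hg_def, hc_def]
    field_simp
    ring
  -- continuity on Icc of u's
  have hu₁c : ContinuousOn u₁ (Icc α β) := fun x hx => (hu₁1 x hx).continuousAt.continuousWithinAt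
  have hu₂c : ContinuousOn u₂ (Icc α β) := fun x hx => (hu₂1 x hx).continuousAt.continuousWithinAt
  have hf₁ : IntervalIntegrable (fun y => (2 * q y / (σ y) ^ 2) * u₁ y * u₂ y)
      MeasureTheory.volume α β := by
    apply ContinuousOn.intervalIntegrable
    rw [uIcc_of_le hαβ.le]
    exact ((((continuous_const.mul hqc).div (hσc.pow 2) hσne).continuousOn.mul hu₁c).mul hu₂c)
  have hf₂ : IntervalIntegrable (fun y => (2 * q y * h y / (σ y) ^ 2) * u₁ y * u₂ y)
      MeasureTheory.volume α β := by
    apply ContinuousOn.intervalIntegrable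
    rw [uIcc_of_le hαβ.le]
    exact (((((continuous_const.mul hqc).mul hhc).div (hσc.pow 2) hσne).continuousOn.mul
      hu₁c).mul hu₂c)
  have hg_int : IntervalIntegrable g MeasureTheory.volume α β := by
    exact (hf₂.const_mul _).sub (hf₁.const_mul _)
  have ftc : (∫ y in α..β, g y) = F β - F α :=
    intervalIntegral.integral_eq_sub_of_hasDerivAt key hg_int
  have hsplit : (∫ y in α..β, g y)
      = (θ' - θ) * (∫ y in α..β, (2 * q y * h y / (σ y) ^ 2) * u₁ y * u₂ y)
        - (θ' * lam₂ - θ * lam₁) * (∫ y in α..β, (2 * q y / (σ y) ^ 2) * u₁ y * u₂ y) := by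
    rw [hg_def]
    rw [intervalIntegral.integral_sub (hf₂.const_mul _) (hf₁.const_mul _),
      intervalIntegral.integral_const_mul, intervalIntegral.integral_const_mul]
  have hFα : F α = (θ' - θ) * (q α * kp α * u₁ α * u₂ α) := by
    have e1 : deriv u₁ α = -(θ * kp α * u₁ α) := by linarith
    have e2 : deriv u₂ α = -(θ' * kp α * u₂ α) := by linarith
    simp only [hF_def, e1, e2]; ring
  have hFβ : F β = -((θ' - θ) * (q β * km β * u₁ β * u₂ β)) := by
    have e1 : deriv u₁ β = θ * km β * u₁ β := by linarith
    have e2 : deriv u₂ β = θ' * km β * u₂ β := by linarith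
    simp only [hF_def, e1, e2]; ring
  rw [hsplit, hFβ, hFα] at ftc
  linarith
end

section
/- Fix θ > 0 and suppose Assumptions 1 and 2 hold (b, σ C¹ with 0 < σ² < C; h C¹ positive; k₊, k₋ C² with 0 < k₊, k₋ < K; H₊(·,θ) strictly decreasing and positive on (−∞,β₋(θ)), negative on (β₋(θ),β₊(θ)) if nonempty, and strictly increasing and positive on (β₊(θ),∞)). Let α < β with β > β₊(θ), set λ = H₊(β,θ), and assume ∂ₓH₊(β,θ) > 0. Suppose w : ℝ → ℝ is twice continuously differentiable on [α,β], satisfies (1/2)σ(x)²w''(x) + (1/2)θ(σ(x)w'(x))² + b(x)w'(x) + h(x) − λ = 0 for all x ∈ [α,β], and satisfies w'(α) = −k₊(α), w'(β) = k₋(β) and w''(β) = k₋'(β). Then w'(x) ≤ k₋(x) for all x ∈ [α,β]. -/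
open Set

/-!
Put `g = k₋ - w'`. Subtracting the Riccati equation from the definition of `H₊` turns it into the
linear equation `g' = p g + 2 (H₊ - λ) / σ²` for a continuous `p`, so with an integrating factor
`e^{-P}`, `P' = p`, the function `G = g e^{-P}` satisfies `G' = 2 (H₊ - λ) e^{-P} / σ²`.
Now `G α > 0 = G β`. If `G x₀ < 0`, the mean value theorem on `[x₀, β]` yields `t ≥ x₀` with
`H₊ t > λ = H₊ β`; the shape of `H₊` forces `t < β₋`, so `H₊ > λ` on `(-∞, t]` and `G` is
nondecreasing on `[α, x₀]`, contradicting `G α > 0 > G x₀`.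
-/

section ShapeOfH

variable {H : ℝ → ℝ} {βm βp β : ℝ}

lemma StrictMonoOn.lt_of_continuousWithinAt_Ioi {a b : ℝ} (hmono : StrictMonoOn H (Ioi a))
    (hH : ContinuousWithinAt H (Ioi a) a) (hab : a < b) : H a < H b := by
  set c := (a + b) / 2
  have hac : a < c := by simp only [c]; linarith
  have hcb : c < b := by simp only [c]; linarith
  have hle : H a ≤ H c :=
    ContinuousWithinAt.closure_le (s := Ioc a c) (by rw [closure_Ioc hac.ne]; exact ⟨le_rfl, hac.le⟩)
      (hH.mono Ioc_subset_Ioi_self) continuousWithinAt_const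
      (fun y hy => hmono.monotoneOn hy.1 hac hy.2)
  exact hle.trans_lt (hmono hac (hac.trans hcb) hcb)

lemma lt_of_le_of_apply_lt (hH : Continuous H) (hneg : ∀ x ∈ Ioo βm βp, H x < 0)
    (hmono : StrictMonoOn H (Ioi βp)) (hβ : βp < β) (hpos : 0 < H β) {t : ℝ} (ht : t ≤ β)
    (hlt : H β < H t) : t < βm := by
  by_contra! hmt
  rcases lt_or_ge t βp with htp | htp
  · have hnonpos : H t ≤ 0 :=
      ContinuousWithinAt.closure_le (s := Ioo βm βp)
        (by rw [closure_Ioo (hmt.trans_lt htp).ne]; exact ⟨hmt, htp.le⟩)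
        hH.continuousWithinAt continuousWithinAt_const (fun y hy => (hneg y hy).le)
    linarith
  · have : H t ≤ H β := by
      rcases htp.eq_or_lt with rfl | htp
      · exact (hmono.lt_of_continuousWithinAt_Ioi hH.continuousWithinAt hβ).le
      · exact hmono.monotoneOn htp (htp.trans_le ht) ht
    linarith

lemma lt_apply_of_le_of_lt_apply (hH : Continuous H) (hanti : StrictAntiOn H (Iio βm))
    (hneg : ∀ x ∈ Ioo βm βp, H x < 0) (hmono : StrictMonoOn H (Ioi βp)) (hβ : βp < β)
    (hpos : 0 < H β) {t y : ℝ} (ht : t ≤ β) (hlt : H β < H t) (hyt : y ≤ t) : H β < H y :=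
  have htm := lt_of_le_of_apply_lt hH hneg hmono hβ hpos ht hlt
  hlt.trans_le (hanti.antitoneOn (hyt.trans_lt htm) htm hyt)

end ShapeOfH

section LinearComparison

variable {a b : ℝ}

lemma exists_hasDerivAt_eq_of_continuousOn_Icc {p : ℝ → ℝ} (hab : a ≤ b)
    (hp : ContinuousOn p (Icc a b)) : ∃ P : ℝ → ℝ, ∀ x ∈ Icc a b, HasDerivAt P (p x) x := by
  set q : ℝ → ℝ := fun x => p (projIcc a b hab x)
  have hq : Continuous q :=
    hp.comp_continuous (continuous_subtype_val.comp continuous_projIcc) fun x => (projIcc a b hab x).2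
  refine ⟨fun x => ∫ t in a..x, q t, fun x hx => ?_⟩
  simpa [q, projIcc_of_mem hab hx] using (hq.integral_hasStrictDerivAt a x).hasDerivAt

lemma nonneg_of_hasDerivAt_of_pos_imp_nonneg {G R : ℝ → ℝ}
    (hG : ∀ x ∈ Icc a b, HasDerivAt G (R x) x) (ha : 0 < G a) (hb : 0 ≤ G b)
    (hR : ∀ t ∈ Icc a b, 0 < R t → ∀ y ∈ Icc a t, 0 ≤ R y) : ∀ x ∈ Icc a b, 0 ≤ G x := by
  intro x hx
  by_contra! hGx
  have hxb : x < b := hx.2.lt_of_ne (by rintro rfl; linarith)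
  have hGc : ContinuousOn G (Icc a b) := fun y hy => (hG y hy).continuousAt.continuousWithinAt
  obtain ⟨t, ht, hRt⟩ := exists_hasDerivAt_eq_slope G R hxb
    (hGc.mono (Icc_subset_Icc_left hx.1))
    (fun y hy => hG y (Ioo_subset_Icc_self.trans (Icc_subset_Icc_left hx.1) hy))
  have hRpos : 0 < R t := hRt ▸ div_pos (by linarith) (by linarith)
  have ht' : t ∈ Icc a b := ⟨hx.1.trans ht.1.le, ht.2.le⟩
  have hmono : MonotoneOn G (Icc a x) := by
    refine monotoneOn_of_hasDerivWithinAt_nonneg (f' := R) (convex_Icc a x)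
      (hGc.mono (Icc_subset_Icc_right hx.2)) (fun y hy => ?_) (fun y hy => ?_)
    · rw [interior_Icc] at hy
      exact (hG y ⟨hy.1.le, hy.2.le.trans hx.2⟩).hasDerivWithinAt
    · rw [interior_Icc] at hy
      exact hR t ht' hRpos y ⟨hy.1.le, hy.2.le.trans ht.1.le⟩
  linarith [hmono ⟨le_rfl, hx.1⟩ ⟨hx.1, le_rfl⟩ hx.1]

lemma nonneg_of_hasDerivAt_linear {g p r : ℝ → ℝ} (hp : ContinuousOn p (Icc a b))
    (hg : ∀ x ∈ Icc a b, HasDerivAt g (p x * g x + r x) x) (ha : 0 < g a) (hb : 0 ≤ g b)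
    (hr : ∀ t ∈ Icc a b, 0 < r t → ∀ y ∈ Icc a t, 0 ≤ r y) : ∀ x ∈ Icc a b, 0 ≤ g x := by
  intro x hx
  obtain ⟨P, hP⟩ := exists_hasDerivAt_eq_of_continuousOn_Icc (hx.1.trans hx.2) hp
  have hG : ∀ y ∈ Icc a b,
      HasDerivAt (fun z => g z * Real.exp (-P z)) (r y * Real.exp (-P y)) y := fun y hy =>
    ((hg y hy).mul (hP y hy).neg.exp).congr_deriv (by simp only [Pi.neg_apply]; ring)
  have := nonneg_of_hasDerivAt_of_pos_imp_nonneg hG (by positivity) (by positivity)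
    (fun t ht hrt y hy => mul_nonneg
      (hr t ht ((mul_pos_iff_of_pos_right (Real.exp_pos _)).1 hrt) y hy) (Real.exp_pos _).le) x hx
  exact nonneg_of_mul_nonneg_left this (Real.exp_pos _)

end LinearComparison

lemma riccati_gap_identity {θ σ b h k k' v v' lam : ℝ} (hσ : σ ≠ 0)
    (hODE : (1 / 2) * σ ^ 2 * v' + (1 / 2) * θ * (σ * v) ^ 2 + b * v + h - lam = 0) :
    k' - v' = -(θ * (k + v) + 2 * b / σ ^ 2) * (k - v)
      + 2 * ((1 / 2) * θ * σ ^ 2 * k ^ 2 + (1 / 2) * σ ^ 2 * k' + b * k + h - lam) / σ ^ 2 := by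
  field_simp
  linear_combination -2 * hODE

theorem upper_gradient_bound_general
    (θ : ℝ)
    (b σ h kp km : ℝ → ℝ) (C K : ℝ)
    (hb : ContDiff ℝ 1 b) (hσ : ContDiff ℝ 1 σ)
    (hσbd : ∀ x : ℝ, 0 < (σ x) ^ 2 ∧ (σ x) ^ 2 < C)
    (hh : ContDiff ℝ 1 h)
    (hkm : ContDiff ℝ 2 km)
    (hkpbd : ∀ x : ℝ, 0 < kp x ∧ kp x < K)
    (hkmbd : ∀ x : ℝ, 0 < km x ∧ km x < K)
    (Hp : ℝ → ℝ)
    (hHp : ∀ x, Hp x = (1 / 2) * θ * (σ x) ^ 2 * (km x) ^ 2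
      + (1 / 2) * (σ x) ^ 2 * deriv km x + b x * km x + h x)
    (βm βp : ℝ)
    (hHp1 : StrictAntiOn Hp (Iio βm))
    (hHp2 : ∀ x ∈ Ioo βm βp, Hp x < 0)
    (hHp3 : StrictMonoOn Hp (Ioi βp)) (hHp3pos : ∀ x, βp < x → 0 < Hp x)
    (α β lam : ℝ) (hβ : βp < β)
    (hlam : lam = Hp β)
    (w : ℝ → ℝ)
    (hw2 : ∀ x ∈ Icc α β, DifferentiableAt ℝ (deriv w) x)
    (hODE : ∀ x ∈ Icc α β,
      (1 / 2) * (σ x) ^ 2 * deriv (deriv w) x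
        + (1 / 2) * θ * (σ x * deriv w x) ^ 2
        + b x * deriv w x + h x - lam = 0)
    (hw'α : deriv w α = -kp α)
    (hw'β : deriv w β = km β) :
    ∀ x ∈ Icc α β, deriv w x ≤ km x := by
  subst hlam
  have hσ0 : ∀ x, σ x ≠ 0 := fun x => pow_ne_zero_iff two_ne_zero |>.1 (hσbd x).1.ne'
  have hHpc : Continuous Hp := by
    rw [funext hHp]
    have := hb.continuous; have := hσ.continuous; have := hh.continuous
    have := hkm.continuous; have := hkm.continuous_deriv one_le_two
    fun_prop
  have hw'c : ContinuousOn (deriv w) (Icc α β) := fun x hx =>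
    (hw2 x hx).continuousAt.continuousWithinAt
  have hp : ContinuousOn (fun x => -(θ * (km x + deriv w x) + 2 * b x / σ x ^ 2)) (Icc α β) :=
    ((continuousOn_const.mul (hkm.continuous.continuousOn.add hw'c)).add
      ((continuousOn_const.mul hb.continuous.continuousOn).div
        (hσ.continuous.continuousOn.pow 2) fun x _ => (hσbd x).1.ne')).neg
  have hgap : ∀ x ∈ Icc α β, HasDerivAt (fun y => km y - deriv w y)
      (-(θ * (km x + deriv w x) + 2 * b x / σ x ^ 2) * (km x - deriv w x)
        + 2 * (Hp x - Hp β) / σ x ^ 2) x := fun x hx =>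
    ((hkm.differentiable two_ne_zero x).hasDerivAt.sub (hw2 x hx).hasDerivAt).congr_deriv
      (hHp x ▸ riccati_gap_identity (hσ0 x) (hODE x hx))
  have hsign : ∀ t ∈ Icc α β, 0 < 2 * (Hp t - Hp β) / σ t ^ 2 →
      ∀ y ∈ Icc α t, 0 ≤ 2 * (Hp y - Hp β) / σ y ^ 2 := by
    intro t ht hrt y hy
    have hlt : Hp β < Hp t := by
      linarith [(div_pos_iff_of_pos_right (hσbd t).1).1 hrt]
    have := lt_apply_of_le_of_lt_apply hHpc hHp1 hHp2 hHp3 hβ (hHp3pos β hβ) ht.2 hlt hy.2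
    exact div_nonneg (by linarith) (sq_nonneg _)
  intro x hx
  have := nonneg_of_hasDerivAt_linear hp hgap (by linarith [hkmbd α, hkpbd α])
    (by simp [hw'β]) hsign x hx
  linarith

/-- the upper gradient bound `w' ≤ k₋` in the continuation
region, established in the proof of Theorem 4.1(II). -/
theorem upper_gradient_bound
    (θ : ℝ) (hθ : 0 < θ)
    (b σ h kp km : ℝ → ℝ) (C K : ℝ)
    (hb : ContDiff ℝ 1 b) (hσ : ContDiff ℝ 1 σ)
    (hσbd : ∀ x : ℝ, 0 < (σ x) ^ 2 ∧ (σ x) ^ 2 < C)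
    (hh : ContDiff ℝ 1 h) (hhpos : ∀ x : ℝ, 0 < h x)
    (hkp : ContDiff ℝ 2 kp) (hkm : ContDiff ℝ 2 km)
    (hkpbd : ∀ x : ℝ, 0 < kp x ∧ kp x < K)
    (hkmbd : ∀ x : ℝ, 0 < km x ∧ km x < K)
    (Hp : ℝ → ℝ)
    (hHp : ∀ x, Hp x = (1 / 2) * θ * (σ x) ^ 2 * (km x) ^ 2
      + (1 / 2) * (σ x) ^ 2 * deriv km x + b x * km x + h x)
    (βm βp : ℝ) (hβmp : βm ≤ βp)
    (hHp1 : StrictAntiOn Hp (Iio βm)) (hHp1pos : ∀ x < βm, 0 < Hp x)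
    (hHp2 : ∀ x ∈ Ioo βm βp, Hp x < 0)
    (hHp3 : StrictMonoOn Hp (Ioi βp)) (hHp3pos : ∀ x, βp < x → 0 < Hp x)
    (α β lam : ℝ) (hαβ : α < β) (hβ : βp < β)
    (hlam : lam = Hp β) (hHp'β : 0 < deriv Hp β)
    (w : ℝ → ℝ)
    (hw1 : ∀ x ∈ Icc α β, DifferentiableAt ℝ w x)
    (hw2 : ∀ x ∈ Icc α β, DifferentiableAt ℝ (deriv w) x)
    (hw2c : ContinuousOn (deriv (deriv w)) (Icc α β))
    (hODE : ∀ x ∈ Icc α β,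
      (1 / 2) * (σ x) ^ 2 * deriv (deriv w) x
        + (1 / 2) * θ * (σ x * deriv w x) ^ 2
        + b x * deriv w x + h x - lam = 0)
    (hw'α : deriv w α = -kp α)
    (hw'β : deriv w β = km β)
    (hw''β : deriv (deriv w) β = deriv km β) :
    ∀ x ∈ Icc α β, deriv w x ≤ km x :=
  upper_gradient_bound_general θ b σ h kp km C K hb hσ hσbd hh hkm hkpbd hkmbd Hp hHp βm βp hHp1
    hHp2 hHp3 hHp3pos α β lam hβ hlam w hw2 hODE hw'α hw'β
end

section
/- Fix θ > 0 and suppose Assumptions 1 and 2 hold (b, σ C¹ with 0 < σ² < C; h C¹ positive; k₊, k₋ C² with 0 < k₊, k₋ < K; H₋(·,θ) strictly decreasing and positive on (−∞,α₋(θ)), negative on (α₋(θ),α₊(θ)) if nonempty, and strictly increasing and positive on (α₊(θ),∞)). Let α < β with α < α₋(θ), set λ = H₋(α,θ), and assume ∂ₓH₋(α,θ) < 0. Suppose w : ℝ → ℝ is twice continuously differentiable on [α,β], satisfies (1/2)σ(x)²w''(x) + (1/2)θ(σ(x)w'(x))² + b(x)w'(x) + h(x) − λ = 0 for all x ∈ [α,β],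 and satisfies w'(α) = −k₊(α), w''(α) = −k₊'(α) and w'(β) = k₋(β). Then w'(x) ≥ −k₊(x) for all x ∈ [α,β]. -/
/-!
Put `F = w' + k₊`. Subtracting the Riccati equation from the definition of `H₋` turns it into the
linear equation `(σ²/2) F' + E F = λ - H₋` with `E = b + θσ²(w' - k₊)/2`, and `F(α) = F'(α) = 0`.
Hence at every zero of `F` the slope of `F` has the sign of `λ - H₋`.
Differentiating once more at `α` gives `(σ²/2) F''(α) = -H₋'(α) > 0`, so `F > 0` just right of `α`.
If `F` became negative, it would cross zero downwards at some `u > α` with `H₋(u) ≥ λ`, forcing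
`u > α₊` because `H₋ < λ = H₋(α)` on `(α, α₊]`; since `F(β) = k₋(β) + k₊(β) > 0` it would then cross
zero upwards at some `z > u` with `H₋(z) ≤ λ ≤ H₋(u)`, contradicting that `H₋` increases on
`(α₊, ∞)`.
-/

open Set Filter Topology

section

variable {f f' : ℝ → ℝ} {a b d : ℝ}

theorem eventually_pos_nhdsGT_of_hasDerivWithinAt (hfa : f a = 0)
    (hf : HasDerivWithinAt f d (Ici a) a) (hd : 0 < d) : ∀ᶠ x in 𝓝[>] a, 0 < f x := by
  have hslope := hasDerivWithinAt_iff_tendsto_slope.mp hf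
  rw [Ici_sdiff_left] at hslope
  filter_upwards [hslope.eventually_const_lt hd, self_mem_nhdsWithin] with x hx hax
  rw [slope_def_field, hfa, sub_zero] at hx
  exact (div_pos_iff_of_pos_right (sub_pos.2 hax)).1 hx

theorem eventually_pos_nhdsLT_of_hasDerivWithinAt (hfa : f a = 0)
    (hf : HasDerivWithinAt f d (Iic a) a) (hd : d < 0) : ∀ᶠ x in 𝓝[<] a, 0 < f x := by
  have hslope := hasDerivWithinAt_iff_tendsto_slope.mp hf
  rw [Iic_sdiff_right] at hslope
  filter_upwards [hslope.eventually_lt_const hd, self_mem_nhdsWithin] with x hx hxa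
  rw [slope_def_field, hfa, sub_zero] at hx
  by_contra! hfx
  exact hx.not_ge (div_nonneg_of_nonpos hfx (sub_nonpos.2 hxa.le))

theorem HasDerivAt.nonpos_of_eventually_neg_nhdsGT (hf : HasDerivAt f d a) (hfa : f a = 0)
    (hneg : ∀ᶠ x in 𝓝[>] a, f x < 0) : d ≤ 0 := by
  by_contra! hd
  obtain ⟨x, hpos, hneg⟩ :=
    ((eventually_pos_nhdsGT_of_hasDerivWithinAt hfa hf.hasDerivWithinAt hd).and hneg).exists
  exact lt_asymm hpos hneg

theorem HasDerivAt.nonneg_of_eventually_neg_nhdsLT (hf : HasDerivAt f d a) (hfa : f a = 0)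
    (hneg : ∀ᶠ x in 𝓝[<] a, f x < 0) : 0 ≤ d := by
  by_contra! hd
  obtain ⟨x, hpos, hneg⟩ :=
    ((eventually_pos_nhdsLT_of_hasDerivWithinAt hfa hf.hasDerivWithinAt hd).and hneg).exists
  exact lt_asymm hpos hneg

theorem eventually_pos_nhdsGT_of_deriv_eq_zero (hfa : f a = 0)
    (hf : ∀ᶠ x in 𝓝[≥] a, HasDerivAt f (f' x) x) (hf'a : f' a = 0)
    (hf' : HasDerivWithinAt f' d (Ici a) a) (hd : 0 < d) : ∀ᶠ x in 𝓝[>] a, 0 < f x := by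
  obtain ⟨c, hac, hc⟩ := mem_nhdsGT_iff_exists_Ioo_subset.1
    ((hf.filter_mono (nhdsWithin_mono a Ioi_subset_Ici_self)).and
      (eventually_pos_nhdsGT_of_hasDerivWithinAt hf'a hf' hd))
  have hderiv : ∀ x ∈ Ico a c, HasDerivAt f (f' x) x := fun x hx =>
    hx.1.eq_or_lt.elim (fun h => h ▸ hf.self_of_nhdsWithin self_mem_Ici)
      fun h => (hc ⟨h, hx.2⟩).1
  filter_upwards [Ioo_mem_nhdsGT hac] with x hx
  obtain ⟨t, ht, hslope⟩ := exists_hasDerivAt_eq_slope f f' hx.1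
    (fun t ht => (hderiv t ⟨ht.1, ht.2.trans_lt hx.2⟩).continuousAt.continuousWithinAt)
    (fun t ht => hderiv t ⟨ht.1.le, ht.2.trans hx.2⟩)
  have hf't : 0 < f' t := (hc ⟨ht.1, ht.2.trans hx.2⟩).2
  rw [hslope, hfa, sub_zero] at hf't
  exact (div_pos_iff_of_pos_right (sub_pos.2 hx.1)).1 hf't

theorem exists_last_zero_of_neg (hab : a ≤ b) (hf : ContinuousOn f (Icc a b)) (ha : 0 ≤ f a)
    (hb : f b < 0) : ∃ u ∈ Ico a b, f u = 0 ∧ ∀ x ∈ Ioc u b, f x < 0 := by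
  set S := Icc a b ∩ f ⁻¹' Ici 0
  have hS : IsCompact S := isCompact_Icc.of_isClosed_subset
    (hf.preimage_isClosed_of_isClosed isClosed_Icc isClosed_Ici) inter_subset_left
  have hu : sSup S ∈ S := hS.sSup_mem ⟨a, ⟨le_rfl, hab⟩, ha⟩
  have hub : sSup S < b := hu.1.2.lt_of_ne fun h => (h ▸ hb).not_ge hu.2
  obtain ⟨s, hs, hfs⟩ := intermediate_value_Icc' hub.le (hf.mono (Icc_subset_Icc_left hu.1.1))
    ⟨hb.le, hu.2⟩
  have hsu : s ≤ sSup S := le_csSup hS.bddAbove ⟨⟨hu.1.1.trans hs.1, hs.2⟩, hfs.ge⟩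
  refine ⟨sSup S, ⟨hu.1.1, hub⟩, le_antisymm hsu hs.1 ▸ hfs, fun x hx => ?_⟩
  by_contra! hfx
  exact hx.1.not_ge (le_csSup hS.bddAbove ⟨⟨hu.1.1.trans hx.1.le, hx.2⟩, hfx⟩)

theorem exists_first_zero_of_neg (hab : a ≤ b) (hf : ContinuousOn f (Icc a b)) (ha : f a < 0)
    (hb : 0 ≤ f b) : ∃ z ∈ Ioc a b, f z = 0 ∧ ∀ x ∈ Ico a z, f x < 0 := by
  set S := Icc a b ∩ f ⁻¹' Ici 0
  have hS : IsCompact S := isCompact_Icc.of_isClosed_subset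
    (hf.preimage_isClosed_of_isClosed isClosed_Icc isClosed_Ici) inter_subset_left
  have hz : sInf S ∈ S := hS.sInf_mem ⟨b, ⟨hab, le_rfl⟩, hb⟩
  have haz : a < sInf S := hz.1.1.lt_of_ne' fun h => (h ▸ ha).not_ge hz.2
  obtain ⟨s, hs, hfs⟩ := intermediate_value_Icc haz.le (hf.mono (Icc_subset_Icc_right hz.1.2))
    ⟨ha.le, hz.2⟩
  have hzs : sInf S ≤ s := csInf_le hS.bddBelow ⟨⟨hs.1, hs.2.trans hz.1.2⟩, hfs.ge⟩
  refine ⟨sInf S, ⟨haz, hz.1.2⟩, le_antisymm hs.2 hzs ▸ hfs, fun x hx => ?_⟩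
  by_contra! hfx
  exact hx.2.not_ge (csInf_le hS.bddBelow ⟨⟨hx.1, hx.2.le.trans hz.1.2⟩, hfx⟩)

end

theorem lt_of_strictAntiOn_Iio_of_neg_Ioo {H : ℝ → ℝ} {a m p : ℝ} (hH : Continuous H)
    (hanti : StrictAntiOn H (Iio m)) (hneg : ∀ x ∈ Ioo m p, H x < 0) (ham : a < m)
    (hHa : 0 < H a) : ∀ x ∈ Ioc a p, H x < H a := by
  intro x hx
  rcases lt_trichotomy x m with hxm | rfl | hmx
  · exact hanti ham hxm hx.1
  · obtain ⟨t, hat, htx⟩ := exists_between hx.1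
    have hle : H x ≤ H t := le_of_tendsto ((hH.tendsto x).mono_left nhdsWithin_le_nhds) <| by
      filter_upwards [Ioo_mem_nhdsLT htx] with s hs using (hanti htx hs.2 hs.1).le
    exact hle.trans_lt (hanti ham htx hat)
  · rcases hx.2.lt_or_eq with hxp | rfl
    · exact (hneg x ⟨hmx, hxp⟩).trans hHa
    · have hle : H x ≤ 0 := le_of_tendsto ((hH.tendsto x).mono_left nhdsWithin_le_nhds) <| by
        filter_upwards [Ioo_mem_nhdsLT hmx] with s hs using (hneg s hs).le
      exact hle.trans_lt hHa

theorem HasDerivAt.hasDerivWithinAt_Ici_of_mul_eq {g s N : ℝ → ℝ} {a n : ℝ}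
    (hN : HasDerivAt N n a) (hNa : N a = 0) (hs : DifferentiableAt ℝ s a) (hsa : s a ≠ 0)
    (heq : ∀ᶠ x in 𝓝[≥] a, s x * g x = N x) : HasDerivWithinAt g (n / s a) (Ici a) a := by
  have hq : HasDerivAt (fun x => N x / s x) (n / s a) a := by
    have := hN.div hs.hasDerivAt hsa
    rwa [hNa, zero_mul, sub_zero, sq, mul_div_mul_right _ _ hsa] at this
  have hg : ∀ᶠ x in 𝓝[≥] a, g x = N x / s x := by
    filter_upwards [heq, nhdsWithin_le_nhds (hs.continuousAt.eventually_ne hsa)] with x hx hsx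
    rw [← hx, mul_div_cancel_left₀ _ hsx]
  exact hq.hasDerivWithinAt.congr_of_eventuallyEq hg (hg.self_of_nhdsWithin self_mem_Ici)

theorem eventually_pos_nhdsGT_of_linearODE {F G E H s : ℝ → ℝ} {a lam H' : ℝ}
    (hF : ∀ᶠ x in 𝓝[≥] a, HasDerivAt F (G x) x) (hFa : F a = 0) (hGa : G a = 0)
    (hE : DifferentiableAt ℝ E a) (hH : HasDerivAt H H' a) (hH' : H' < 0) (hHa : H a = lam)
    (hs : DifferentiableAt ℝ s a) (hsa : 0 < s a)
    (hode : ∀ᶠ x in 𝓝[≥] a, s x * G x + E x * F x = lam - H x) :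
    ∀ᶠ x in 𝓝[>] a, 0 < F x := by
  have hF' : HasDerivAt F 0 a := hGa ▸ hF.self_of_nhdsWithin self_mem_Ici
  have hN : HasDerivAt (fun x => lam - H x - E x * F x) (-H') a := by
    have := (hH.const_sub lam).sub (hE.hasDerivAt.mul hF')
    rwa [hFa, mul_zero, mul_zero, add_zero, sub_zero] at this
  have hG : HasDerivWithinAt G (-H' / s a) (Ici a) a :=
    hN.hasDerivWithinAt_Ici_of_mul_eq (by rw [hFa, hHa]; ring) hs hsa.ne'
      (hode.mono fun x hx => by linarith)
  exact eventually_pos_nhdsGT_of_deriv_eq_zero hFa hF hGa hG (div_pos (neg_pos.2 hH') hsa)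

theorem nonneg_of_linearODE {F G E H s : ℝ → ℝ} {a b p lam : ℝ}
    (hF : ∀ x ∈ Icc a b, HasDerivAt F (G x) x) (hFa : 0 ≤ F a) (hFb : 0 ≤ F b)
    (hF_right : ∀ᶠ x in 𝓝[>] a, 0 < F x) (hs : ∀ x ∈ Icc a b, 0 < s x)
    (hode : ∀ x ∈ Icc a b, s x * G x + E x * F x = lam - H x)
    (hH_lt : ∀ x ∈ Ioc a p, H x < lam) (hH_mono : StrictMonoOn H (Ioi p)) :
    ∀ y ∈ Icc a b, 0 ≤ F y := by
  have hcont : ContinuousOn F (Icc a b) := fun x hx => (hF x hx).continuousAt.continuousWithinAt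
  intro y hy
  by_contra! hFy
  obtain ⟨u, hu, hFu, hneg_u⟩ :=
    exists_last_zero_of_neg hy.1 (hcont.mono (Icc_subset_Icc_right hy.2)) hFa hFy
  obtain ⟨z, hz, hFz, hneg_z⟩ :=
    exists_first_zero_of_neg hy.2 (hcont.mono (Icc_subset_Icc_left hy.1)) hFy hFb
  have hu_mem : u ∈ Icc a b := ⟨hu.1, hu.2.le.trans hy.2⟩
  have hz_mem : z ∈ Icc a b := ⟨hy.1.trans hz.1.le, hz.2⟩
  have hneg_u' : ∀ᶠ x in 𝓝[>] u, F x < 0 := mem_of_superset (Ioc_mem_nhdsGT hu.2) hneg_u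
  have hau : a < u := by
    refine hu.1.lt_of_ne fun hau => ?_
    obtain ⟨x, hpos, hneg⟩ := (hF_right.and (hau ▸ hneg_u')).exists
    exact lt_asymm hpos hneg
  have hHu : lam ≤ H u := by
    have hGu := (hF u hu_mem).nonpos_of_eventually_neg_nhdsGT hFu hneg_u'
    have := hode u hu_mem
    rw [hFu, mul_zero, add_zero] at this
    linarith [mul_nonpos_of_nonneg_of_nonpos (hs u hu_mem).le hGu]
  have hHz : H z ≤ lam := by
    have hGz := (hF z hz_mem).nonneg_of_eventually_neg_nhdsLT hFz
      (mem_of_superset (Ico_mem_nhdsLT hz.1) hneg_z)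
    have := hode z hz_mem
    rw [hFz, mul_zero, add_zero] at this
    linarith [mul_nonneg (hs z hz_mem).le hGz]
  have hpu : p < u := not_le.1 fun hup => (hH_lt u ⟨hau, hup⟩).not_ge hHu
  have huz : u < z := hu.2.trans hz.1
  linarith [hH_mono hpu (hpu.trans huz) huz]

theorem lower_gradient_bound_general
    (θ : ℝ)
    (b σ h kp km : ℝ → ℝ) (C K : ℝ)
    (hb : ContDiff ℝ 1 b) (hσ : ContDiff ℝ 1 σ)
    (hσbd : ∀ x : ℝ, 0 < (σ x) ^ 2 ∧ (σ x) ^ 2 < C)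
    (hh : ContDiff ℝ 1 h)
    (hkp : ContDiff ℝ 2 kp)
    (hkpbd : ∀ x : ℝ, 0 < kp x ∧ kp x < K)
    (hkmbd : ∀ x : ℝ, 0 < km x ∧ km x < K)
    (Hm : ℝ → ℝ)
    (hHm : ∀ x, Hm x = (1 / 2) * θ * (σ x) ^ 2 * (kp x) ^ 2
      - (1 / 2) * (σ x) ^ 2 * deriv kp x - b x * kp x + h x)
    (αm αp : ℝ)
    (hHm1 : StrictAntiOn Hm (Iio αm)) (hHm1pos : ∀ x < αm, 0 < Hm x)
    (hHm2 : ∀ x ∈ Ioo αm αp, Hm x < 0)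
    (hHm3 : StrictMonoOn Hm (Ioi αp))
    (α β lam : ℝ) (hαβ : α < β) (hα : α < αm)
    (hlam : lam = Hm α) (hHm'α : deriv Hm α < 0)
    (w : ℝ → ℝ)
    (hw2 : ∀ x ∈ Icc α β, DifferentiableAt ℝ (deriv w) x)
    (hODE : ∀ x ∈ Icc α β,
      (1 / 2) * (σ x) ^ 2 * deriv (deriv w) x
        + (1 / 2) * θ * (σ x * deriv w x) ^ 2
        + b x * deriv w x + h x - lam = 0)
    (hw'α : deriv w α = -kp α)
    (hw''α : deriv (deriv w) α = -deriv kp α)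
    (hw'β : deriv w β = km β) :
    ∀ x ∈ Icc α β, -kp x ≤ deriv w x := by
  set F := fun x => deriv w x + kp x
  set G := fun x => deriv (deriv w) x + deriv kp x
  have hkp' := hkp.differentiable two_ne_zero
  have hF : ∀ x ∈ Icc α β, HasDerivAt F (G x) x := fun x hx =>
    (hw2 x hx).hasDerivAt.add (hkp' x).hasDerivAt
  have hode : ∀ x ∈ Icc α β, σ x ^ 2 / 2 * G x
      + (b x + θ * σ x ^ 2 * (deriv w x - kp x) / 2) * F x = lam - Hm x := fun x hx => by
    rw [hHm x]
    linear_combination hODE x hx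
  have hFα : F α = 0 := by simp [F, hw'α]
  have hF_right : ∀ᶠ x in 𝓝[>] α, 0 < F x := by
    have := hb.differentiable one_ne_zero
    have := hσ.differentiable one_ne_zero
    have := hw2 α ⟨le_rfl, hαβ.le⟩
    exact eventually_pos_nhdsGT_of_linearODE (mem_of_superset (Icc_mem_nhdsGE hαβ) hF) hFα
      (by simp [G, hw''α]) (by fun_prop) (differentiableAt_of_deriv_ne_zero hHm'α.ne).hasDerivAt
      hHm'α hlam.symm (by fun_prop) (half_pos (hσbd α).1)
      (mem_of_superset (Icc_mem_nhdsGE hαβ) hode)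
  have hHm_lt : ∀ x ∈ Ioc α αp, Hm x < lam :=
    hlam ▸ lt_of_strictAntiOn_Iio_of_neg_Ioo
      (Continuous.congr (by fun_prop (disch := norm_num)) fun x => (hHm x).symm)
      hHm1 hHm2 hα (hHm1pos α hα)
  intro x hx
  have hFx := nonneg_of_linearODE hF hFα.ge (add_pos (hw'β ▸ (hkmbd β).1) (hkpbd β).1).le
    hF_right (fun x _ => half_pos (hσbd x).1) hode hHm_lt hHm3 x hx
  simp only [F] at hFx
  linarith

/-- the lower gradient bound `w' ≥ −k₊` in the continuation
region, established in the proof of Theorem 4.1(II). -/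
theorem lower_gradient_bound
    (θ : ℝ) (hθ : 0 < θ)
    (b σ h kp km : ℝ → ℝ) (C K : ℝ)
    (hb : ContDiff ℝ 1 b) (hσ : ContDiff ℝ 1 σ)
    (hσbd : ∀ x : ℝ, 0 < (σ x) ^ 2 ∧ (σ x) ^ 2 < C)
    (hh : ContDiff ℝ 1 h) (hhpos : ∀ x : ℝ, 0 < h x)
    (hkp : ContDiff ℝ 2 kp) (hkm : ContDiff ℝ 2 km)
    (hkpbd : ∀ x : ℝ, 0 < kp x ∧ kp x < K)
    (hkmbd : ∀ x : ℝ, 0 < km x ∧ km x < K)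
    (Hm : ℝ → ℝ)
    (hHm : ∀ x, Hm x = (1 / 2) * θ * (σ x) ^ 2 * (kp x) ^ 2
      - (1 / 2) * (σ x) ^ 2 * deriv kp x - b x * kp x + h x)
    (αm αp : ℝ) (hαmp : αm ≤ αp)
    (hHm1 : StrictAntiOn Hm (Iio αm)) (hHm1pos : ∀ x < αm, 0 < Hm x)
    (hHm2 : ∀ x ∈ Ioo αm αp, Hm x < 0)
    (hHm3 : StrictMonoOn Hm (Ioi αp)) (hHm3pos : ∀ x, αp < x → 0 < Hm x)
    (α β lam : ℝ) (hαβ : α < β) (hα : α < αm)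
    (hlam : lam = Hm α) (hHm'α : deriv Hm α < 0)
    (w : ℝ → ℝ)
    (hw1 : ∀ x ∈ Icc α β, DifferentiableAt ℝ w x)
    (hw2 : ∀ x ∈ Icc α β, DifferentiableAt ℝ (deriv w) x)
    (hw2c : ContinuousOn (deriv (deriv w)) (Icc α β))
    (hODE : ∀ x ∈ Icc α β,
      (1 / 2) * (σ x) ^ 2 * deriv (deriv w) x
        + (1 / 2) * θ * (σ x * deriv w x) ^ 2
        + b x * deriv w x + h x - lam = 0)
    (hw'α : deriv w α = -kp α)
    (hw''α : deriv (deriv w) α = -deriv kp α)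
    (hw'β : deriv w β = km β) :
    ∀ x ∈ Icc α β, -kp x ≤ deriv w x :=
  lower_gradient_bound_general θ b σ h kp km C K hb hσ hσbd hh hkp hkpbd hkmbd Hm hHm αm αp hHm1
    hHm1pos hHm2 hHm3 α β lam hαβ hα hlam hHm'α w hw2 hODE hw'α hw''α hw'β
end

section
/- Let θ > 0, λ ∈ ℝ, α < β, and let b, σ, h : ℝ → ℝ be C¹ with σ(x)² > 0 for all x, and let k₊ : ℝ → ℝ be C². Define H₋(x,θ) = (1/2)θσ(x)²k₊(x)² − (1/2)σ(x)²k₊'(x) − b(x)k₊(x) + h(x). Suppose w : ℝ → ℝ is three times continuously differentiable on (α,β), satisfies (1/2)σ(x)²w''(x) + (1/2)θ(σ(x)w'(x))² + b(x)w'(x) + h(x) − λ = 0 for all x ∈ (α,β), and w'(x) → −k₊(α) and w''(x) → −k₊'(α) as x ↓ α. Then w'''(x) + k₊''(x) → −(2/σ(α)²) ∂ₓH₋(α,θ) as x ↓ α. -/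
/-!
Along a solution, `w' = p` and `w'' = q` satisfy `R(x, p, q) = 0` for the Riccati expression `R`,
while `H₋(x) = R(x, -k₊, -k₊') + λ`. Differentiating both along their curves gives the same
first-order terms `S(x, p, q)` plus `½σ²` times the third-order term, so
`w''' = -(2/σ²) S(x, w', w'')` and `∂ₓH₋ = S(x, -k₊, -k₊') - ½σ²k₊''`. Since `S` is continuous
and `(w', w'') → (-k₊, -k₊')(α)`, the limit of `w''' + k₊''` is `-(2/σ²) ∂ₓH₋(α)`.
-/

open Set Filter Topology

noncomputable section

namespace Riccati

variable (θ lam : ℝ) (σ b h : ℝ → ℝ)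

/-- The left-hand side of the Riccati ODE, with `p` and `q` in place of `w'` and `w''`. -/
def expr (x p q : ℝ) : ℝ :=
  (1 / 2) * σ x ^ 2 * q + (1 / 2) * θ * (σ x * p) ^ 2 + b x * p + h x - lam

/-- The derivative of `expr` along a curve `(x, p, q)` with `p' = q`, except the term
`½ σ² q'`. -/
def slope (x p q : ℝ) : ℝ :=
  σ x * deriv σ x * q + θ * (σ x * p) * (deriv σ x * p + σ x * q)
    + deriv b x * p + b x * q + deriv h x

variable {θ lam σ b h}

theorem hasDerivAt_expr {p q : ℝ → ℝ} {x r : ℝ}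
    (hσ : DifferentiableAt ℝ σ x) (hb : DifferentiableAt ℝ b x) (hh : DifferentiableAt ℝ h x)
    (hp : HasDerivAt p (q x) x) (hq : HasDerivAt q r x) :
    HasDerivAt (fun y => expr θ lam σ b h y (p y) (q y))
      (slope θ σ b h x (p x) (q x) + (1 / 2) * σ x ^ 2 * r) x := by
  have := (((((hσ.hasDerivAt.pow 2).const_mul (1 / 2 : ℝ)).mul hq).add
    (((hσ.hasDerivAt.mul hp).pow 2).const_mul ((1 / 2) * θ))).add
    (hb.hasDerivAt.mul hp)).add hh.hasDerivAt |>.sub_const lam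
  refine this.congr_deriv ?_
  simp only [slope, Pi.mul_apply, Pi.pow_apply]
  ring

theorem hasDerivAt_expr_neg {k : ℝ → ℝ} {x : ℝ}
    (hσ : DifferentiableAt ℝ σ x) (hb : DifferentiableAt ℝ b x) (hh : DifferentiableAt ℝ h x)
    (hk : ContDiff ℝ 2 k) :
    HasDerivAt (fun y => expr θ lam σ b h y (-k y) (-deriv k y))
      (slope θ σ b h x (-k x) (-deriv k x) - (1 / 2) * σ x ^ 2 * deriv (deriv k) x) x := by
  have hk' : ContDiff ℝ 1 (deriv k) := ContDiff.deriv' (n := 1) hk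
  refine (hasDerivAt_expr hσ hb hh (hk.differentiable two_ne_zero x).hasDerivAt.neg
    (hk'.differentiable one_ne_zero x).hasDerivAt.neg).congr_deriv ?_
  simp only [Pi.neg_apply]
  ring

theorem deriv_deriv_deriv_eq_of_expr_eq_zero {w : ℝ → ℝ} {x : ℝ}
    (hσ : DifferentiableAt ℝ σ x) (hb : DifferentiableAt ℝ b x) (hh : DifferentiableAt ℝ h x)
    (hσx : σ x ≠ 0) (hw2 : DifferentiableAt ℝ (deriv w) x)
    (hw3 : DifferentiableAt ℝ (deriv (deriv w)) x)
    (hODE : ∀ᶠ y in 𝓝 x, expr θ lam σ b h y (deriv w y) (deriv (deriv w) y) = 0) :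
    deriv (deriv (deriv w)) x
      = -(2 / σ x ^ 2) * slope θ σ b h x (deriv w x) (deriv (deriv w) x) := by
  have hzero : HasDerivAt (fun y => expr θ lam σ b h y (deriv w y) (deriv (deriv w) y)) 0 x :=
    (hasDerivAt_const x (0 : ℝ)).congr_of_eventuallyEq hODE
  have hsum := (hasDerivAt_expr hσ hb hh hw2.hasDerivAt hw3.hasDerivAt).unique hzero
  field_simp
  linear_combination 2 * hsum

theorem continuous_slope (hσ : ContDiff ℝ 1 σ) (hb : ContDiff ℝ 1 b) (hh : ContDiff ℝ 1 h) :
    Continuous fun v : ℝ × ℝ × ℝ => slope θ σ b h v.1 v.2.1 v.2.2 := by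
  have := hσ.continuous; have := hσ.continuous_deriv le_rfl
  have := hb.continuous; have := hb.continuous_deriv le_rfl
  have := hh.continuous_deriv le_rfl
  unfold slope
  fun_prop

end Riccati

end

open Riccati

theorem third_derivative_boundary_limit_general
    (θ lam α β : ℝ) (hαβ : α < β)
    (b σ h : ℝ → ℝ)
    (hb : ContDiff ℝ 1 b) (hσ : ContDiff ℝ 1 σ) (hh : ContDiff ℝ 1 h)
    (hσpos : ∀ x : ℝ, 0 < (σ x) ^ 2)
    (kp : ℝ → ℝ) (hkp : ContDiff ℝ 2 kp)
    (Hm : ℝ → ℝ)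
    (hHm : ∀ x, Hm x = (1 / 2) * θ * (σ x) ^ 2 * (kp x) ^ 2
      - (1 / 2) * (σ x) ^ 2 * deriv kp x - b x * kp x + h x)
    (w : ℝ → ℝ)
    (hw2 : ∀ x ∈ Ioo α β, DifferentiableAt ℝ (deriv w) x)
    (hw3 : ∀ x ∈ Ioo α β, DifferentiableAt ℝ (deriv (deriv w)) x)
    (hODE : ∀ x ∈ Ioo α β,
      (1 / 2) * (σ x) ^ 2 * deriv (deriv w) x
        + (1 / 2) * θ * (σ x * deriv w x) ^ 2
        + b x * deriv w x + h x - lam = 0)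
    (hw'lim : Tendsto (deriv w) (𝓝[>] α) (𝓝 (-kp α)))
    (hw''lim : Tendsto (deriv (deriv w)) (𝓝[>] α) (𝓝 (-deriv kp α))) :
    Tendsto (fun x => deriv (deriv (deriv w)) x + deriv (deriv kp) x)
      (𝓝[>] α) (𝓝 (-(2 / (σ α) ^ 2) * deriv Hm α)) := by
  have hσne x : σ x ≠ 0 := (pow_ne_zero_iff two_ne_zero).mp (hσpos x).ne'
  have hHm_eq : Hm = fun y => expr θ lam σ b h y (-kp y) (-deriv kp y) + lam :=
    funext fun y => by rw [hHm]; unfold expr; ring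
  have hderivHm : deriv Hm α = slope θ σ b h α (-kp α) (-deriv kp α)
      - (1 / 2) * σ α ^ 2 * deriv (deriv kp) α := by
    rw [hHm_eq]
    exact ((hasDerivAt_expr_neg (hσ.differentiable one_ne_zero α)
      (hb.differentiable one_ne_zero α) (hh.differentiable one_ne_zero α) hkp).add_const lam).deriv
  have hw''' : ∀ x ∈ Ioo α β, deriv (deriv (deriv w)) x
      = -(2 / σ x ^ 2) * slope θ σ b h x (deriv w x) (deriv (deriv w) x) := fun x hx =>
    deriv_deriv_deriv_eq_of_expr_eq_zero (hσ.differentiable one_ne_zero x)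
      (hb.differentiable one_ne_zero x) (hh.differentiable one_ne_zero x) (hσne x) (hw2 x hx)
      (hw3 x hx) (eventually_of_mem (isOpen_Ioo.mem_nhds hx) hODE)
  have hσ2 : Tendsto (fun x => σ x ^ 2) (𝓝[>] α) (𝓝 (σ α ^ 2)) :=
    ((hσ.continuous.tendsto α).mono_left nhdsWithin_le_nhds).pow 2
  have hkp'' : Tendsto (deriv (deriv kp)) (𝓝[>] α) (𝓝 (deriv (deriv kp) α)) :=
    (((ContDiff.deriv' (n := 1) hkp).continuous_deriv le_rfl).tendsto α).mono_left
      nhdsWithin_le_nhds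
  have hslope := ((continuous_slope (θ := θ) hσ hb hh).tendsto _).comp
    ((tendsto_id.mono_left nhdsWithin_le_nhds).prodMk_nhds (hw'lim.prodMk_nhds hw''lim))
  have hlim := (((tendsto_const_nhds (x := (2 : ℝ))).div hσ2
    (pow_ne_zero 2 (hσne α))).neg.mul hslope).add hkp''
  convert hlim.congr' ?_ using 2
  · rw [hderivHm]; field_simp [hσne α]; ring
  · filter_upwards [Ioo_mem_nhdsGT hαβ] with x hx
    rw [hw''' x hx]; rfl

/-- the third-derivative boundary limit, obtained by
differentiating the Riccati ODE, establishing the strict inequality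
`w'' + k₊' > 0` just to the right of the left free boundary. -/
theorem third_derivative_boundary_limit
    (θ lam α β : ℝ) (hθ : 0 < θ) (hαβ : α < β)
    (b σ h : ℝ → ℝ)
    (hb : ContDiff ℝ 1 b) (hσ : ContDiff ℝ 1 σ) (hh : ContDiff ℝ 1 h)
    (hσpos : ∀ x : ℝ, 0 < (σ x) ^ 2)
    (kp : ℝ → ℝ) (hkp : ContDiff ℝ 2 kp)
    (Hm : ℝ → ℝ)
    (hHm : ∀ x, Hm x = (1 / 2) * θ * (σ x) ^ 2 * (kp x) ^ 2
      - (1 / 2) * (σ x) ^ 2 * deriv kp x - b x * kp x + h x)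
    (w : ℝ → ℝ)
    (hw1 : ∀ x ∈ Ioo α β, DifferentiableAt ℝ w x)
    (hw2 : ∀ x ∈ Ioo α β, DifferentiableAt ℝ (deriv w) x)
    (hw3 : ∀ x ∈ Ioo α β, DifferentiableAt ℝ (deriv (deriv w)) x)
    (hw3c : ContinuousOn (deriv (deriv (deriv w))) (Ioo α β))
    (hODE : ∀ x ∈ Ioo α β,
      (1 / 2) * (σ x) ^ 2 * deriv (deriv w) x
        + (1 / 2) * θ * (σ x * deriv w x) ^ 2
        + b x * deriv w x + h x - lam = 0)
    (hw'lim : Tendsto (deriv w) (𝓝[>] α) (𝓝 (-kp α)))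
    (hw''lim : Tendsto (deriv (deriv w)) (𝓝[>] α) (𝓝 (-deriv kp α))) :
    Tendsto (fun x => deriv (deriv (deriv w)) x + deriv (deriv kp) x)
      (𝓝[>] α) (𝓝 (-(2 / (σ α) ^ 2) * deriv Hm α)) :=
  third_derivative_boundary_limit_general θ lam α β hαβ b σ h hb hσ hh hσpos kp hkp Hm hHm w hw2 hw3
    hODE hw'lim hw''lim
end

section
/- Let b₀ ∈ ℝ and let Λ, H, ρ : (b₀,∞) → ℝ be such that Λ is differentiable on (b₀,∞) with Λ'(β) = ρ(β)(Λ(β) − H(β)) and ρ(β) < 0 for all β > b₀, and H(β) → ∞ as β → ∞. Then it is not the case that Λ(β) > H(β) for all β > b₀; that is, there exists β > b₀ with Λ(β) ≤ H(β). -/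
open Set Filter

/-- the contradiction argument in the proof of Theorem 4.1(I):
a function `Λ` satisfying `Λ' = ρ(Λ − H)` with `ρ < 0` cannot stay strictly
above `H` when `H(β) → ∞` as `β → ∞`. -/
theorem crossing_argument
    (b₀ : ℝ) (Λ H ρ : ℝ → ℝ)
    (hΛ : ∀ β > b₀, HasDerivAt Λ (ρ β * (Λ β - H β)) β)
    (hρ : ∀ β > b₀, ρ β < 0)
    (hH : Tendsto H atTop atTop) :
    ∃ β > b₀, Λ β ≤ H β := by
  by_contra h
  push_neg at h
  -- Λ is strictly decreasing on (b₀, ∞)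
  have hanti : StrictAntiOn Λ (Set.Ioi b₀) :=
    strictAntiOn_of_deriv_neg (convex_Ioi b₀)
      (fun x hx => ((hΛ x hx).continuousAt.continuousWithinAt))
      (fun x hx => by
        rw [interior_Ioi] at hx
        rw [(hΛ x hx).deriv]
        exact mul_neg_of_neg_of_pos (hρ x hx) (sub_pos.mpr (h x hx)))
  -- pick β₂ large with H β₂ ≥ Λ (b₀ + 1)
  obtain ⟨β₂, hβ₂⟩ := (hH.eventually_ge_atTop (Λ (b₀ + 1))).and
    (eventually_gt_atTop (b₀ + 1)) |>.exists
  have h1 : b₀ < b₀ + 1 := by linarith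
  have h2 : Λ β₂ < Λ (b₀ + 1) :=
    hanti (Set.mem_Ioi.mpr h1) (Set.mem_Ioi.mpr (h1.trans hβ₂.2)) hβ₂.2
  have := h β₂ (h1.trans hβ₂.2)
  linarith [hβ₂.1]
end

section
/- Let γ > 0, s > 0, μ ∈ ℝ, x ∈ ℝ and p > 0. For T > 0 define m_T = μ + (x − μ)·exp(−γT) and v_T = (s²/(2γ))·(1 − exp(−2γT)). Then the function T ↦ (1/T)·log(∫ exp(p·|y|) d(gaussianReal m_T v_T)(y)) tends to 0 as T → ∞. -/
open MeasureTheory ProbabilityTheory Filter Real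
open scoped NNReal

/-! `E[exp(p|X_T|)]` is dominated by the sum of the moment generating functions of the Gaussian
`X_T` at `±p`, i.e. by `2 exp(p|m_T| + v_T p²/2)`. The mean and variance of `X_T` stay bounded in
`T`, so `log E[exp(p|X_T|)]` is bounded, and dividing by `T` sends it to `0`. -/

lemma exp_mul_abs_le_add (p y : ℝ) : exp (p * |y|) ≤ exp (p * y) + exp (-p * y) := by
  rcases abs_cases y with ⟨h, _⟩ | ⟨h, _⟩
  · rw [h]
    exact le_add_of_nonneg_right (exp_pos _).le
  · rw [h, mul_neg, ← neg_mul]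
    exact le_add_of_nonneg_left (exp_pos _).le

section

variable {μ : Measure ℝ} {p : ℝ}

lemma integral_exp_mul_abs_le_mgf_add_mgf (hpos : Integrable (fun y ↦ exp (p * y)) μ)
    (hneg : Integrable (fun y ↦ exp (-p * y)) μ) :
    ∫ y, exp (p * |y|) ∂μ ≤ mgf id μ p + mgf id μ (-p) := by
  simp only [mgf, id]
  rw [← integral_add hpos hneg]
  exact integral_mono (integrable_exp_mul_abs hpos hneg) (hpos.add hneg) (exp_mul_abs_le_add p)

lemma one_le_integral_exp_mul_abs [IsProbabilityMeasure μ] (hp : 0 ≤ p)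
    (h : Integrable (fun y ↦ exp (p * |y|)) μ) : 1 ≤ ∫ y, exp (p * |y|) ∂μ := by
  calc (1 : ℝ) = ∫ _, (1 : ℝ) ∂μ := by simp
    _ ≤ ∫ y, exp (p * |y|) ∂μ :=
      integral_mono (integrable_const 1) h fun y ↦ one_le_exp (by positivity)

end

lemma integral_exp_mul_abs_gaussianReal_le (m : ℝ) (v : ℝ≥0) {p : ℝ} (hp : 0 ≤ p) :
    ∫ y, exp (p * |y|) ∂gaussianReal m v ≤ 2 * exp (p * |m| + v * p ^ 2 / 2) := by
  refine (integral_exp_mul_abs_le_mgf_add_mgf (integrable_exp_mul_gaussianReal p)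
    (integrable_exp_mul_gaussianReal (-p))).trans ?_
  rw [mgf_id_gaussianReal, two_mul]
  dsimp only
  rw [neg_sq]
  refine add_le_add (exp_le_exp.mpr ?_) (exp_le_exp.mpr ?_) <;>
    nlinarith [le_abs_self m, neg_abs_le m]

lemma abs_log_integral_exp_mul_abs_gaussianReal_le (m : ℝ) (v : ℝ≥0) {p : ℝ} (hp : 0 ≤ p) :
    |log (∫ y, exp (p * |y|) ∂gaussianReal m v)| ≤ log 2 + p * |m| + v * p ^ 2 / 2 := by
  have hint := integrable_exp_mul_abs (integrable_exp_mul_gaussianReal (μ := m) (v := v) p)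
    (integrable_exp_mul_gaussianReal (-p))
  have hone := one_le_integral_exp_mul_abs hp hint
  rw [abs_of_nonneg (log_nonneg hone), add_assoc, ← log_exp (p * |m| + _), ← log_mul two_ne_zero
    (exp_pos _).ne']
  exact log_le_log (by linarith) (integral_exp_mul_abs_gaussianReal_le m v hp)

theorem ou_admissibility_limit_general
    (γ s μ x p : ℝ) (hγ : 0 < γ) (hp : 0 < p) :
    Tendsto
      (fun T : ℝ =>
        (1 / T) * Real.log (∫ y,
          Real.exp (p * |y|)
            ∂(gaussianReal (μ + (x - μ) * Real.exp (-γ * T))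
              (Real.toNNReal (s ^ 2 / (2 * γ) * (1 - Real.exp (-2 * γ * T)))))))
      atTop (nhds 0) := by
  have hbounded : ∀ᶠ T in atTop, ‖log (∫ y, exp (p * |y|)
      ∂(gaussianReal (μ + (x - μ) * exp (-γ * T))
        (Real.toNNReal (s ^ 2 / (2 * γ) * (1 - exp (-2 * γ * T))))))‖
      ≤ log 2 + p * (|μ| + |x - μ|) + s ^ 2 / (2 * γ) * p ^ 2 / 2 := by
    filter_upwards [eventually_ge_atTop 0] with T hT
    have hmean : |μ + (x - μ) * exp (-γ * T)| ≤ |μ| + |x - μ| := by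
      refine (abs_add_le _ _).trans (add_le_add_right ?_ _)
      rw [abs_mul, abs_of_pos (exp_pos _)]
      exact mul_le_of_le_one_right (abs_nonneg _) (exp_le_one_iff.mpr (by nlinarith))
    have hvar : ((s ^ 2 / (2 * γ) * (1 - exp (-2 * γ * T))).toNNReal : ℝ) ≤ s ^ 2 / (2 * γ) := by
      rw [Real.coe_toNNReal']
      exact max_le (mul_le_of_le_one_right (by positivity) (by linarith [exp_pos (-2 * γ * T)]))
        (by positivity)
    refine (abs_log_integral_exp_mul_abs_gaussianReal_le _ _ hp.le).trans ?_
    gcongr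
  simpa [one_div] using tendsto_inv_atTop_zero.zero_mul_isBoundedUnder_le
    (isBoundedUnder_of_eventually_le hbounded)

/-- for the Ornstein–Uhlenbeck process
`dX_t = γ(μ − X_t)dt + s dW_t` started at `x`, whose marginal `X_T` is Gaussian
with mean `m_T = μ + (x − μ)e^{−γT}` and variance
`v_T = (s²/(2γ))(1 − e^{−2γT})`, one has
`(1/T) ln E[exp(p|X_T|)] → 0` as `T → ∞` (Example 2.2 of the paper). -/
theorem ou_admissibility_limit
    (γ s μ x p : ℝ) (hγ : 0 < γ) (hs : 0 < s) (hp : 0 < p) :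
    Tendsto
      (fun T : ℝ =>
        (1 / T) * Real.log (∫ y,
          Real.exp (p * |y|)
            ∂(gaussianReal (μ + (x - μ) * Real.exp (-γ * T))
              (Real.toNNReal (s ^ 2 / (2 * γ) * (1 - Real.exp (-2 * γ * T)))))))
      atTop (nhds 0) :=
  ou_admissibility_limit_general γ s μ x p hγ hp
end
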